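/- arXiv:1803.04281 — 5 statements merged into one kernel-verified Lean document; each statement's English description precedes it below -/
import Mathlib

section
/- (Nonautonomous Markus–Yamabe conjecture in dimension 1.) Let g : [0,∞) × ℝ → ℝ be continuous in t and C¹ in the second variable, with g(t,x) = 0 if and only if x = 0 (for all t ≥ 0), and suppose ∂₂g(t, y(t)) is bounded in t for every measurable function y : [0,∞) → ℝ. Assume that for every measurable function θ : [0,∞) → ℝ there exist constants K ≥ 1 and α > 0 such that exp(∫_s^t ∂₂g(τ, θ(τ)) dτ) ≤ K e^{-α(t-s)} for all t ≥ s ≥ 0 (i.e., the exponential dichotomy spectrum on [0,∞) of the linearization ż = ∂₂g(t, θ(t)) z is contained in (-∞, 0)). Then for every solution x : [t₀,∞) → ℝ of ẋ = g(t,x) with x(t₀) = x₀ there exist constants K ≥ 1 and α > 0 such that |x(t)| ≤ K e^{-α(t - t₀)} |x₀| for all t ≥ t₀; in particular every solution converges to 0 and the trivial solution is globally uniformly asymptotically stable. -/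
open Real Set Filter Topology MeasureTheory

/-!
Where a solution `x` does not vanish, `log |x|` has derivative `g(t,x)/x`, which by the mean
value theorem is a value `∂₂g(t,ξ)` with `ξ` between `0` and `x(t)`. Since `∂₂g(t,·)` is
continuous, such values can be hit up to an error `e^{-t}` along a *measurable* curve `θ`, chosen
from a dense sequence. Integrating, `log |x(t)| - log |x(s)|` is at most
`∫ₛᵗ ∂₂g(τ,θ τ) dτ + 1`, which the exponential estimate for the linearization along `θ` controls,
and at least `-(M+1)(t-s)`, where `M` bounds `∂₂g(·,θ)`. These two-sided multiplicative bounds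
also show that a solution can neither reach nor leave `0` in finite time, so either `x₀ = 0` and
`x ≡ 0`, or `x` never vanishes.
-/

theorem measurable_apply_of_continuous_of_measurable {α : Type*} [MeasurableSpace α]
    {G : α → ℝ → ℝ} (hG_meas : ∀ ξ, Measurable fun τ => G τ ξ) (hG_cont : ∀ τ, Continuous (G τ))
    {w : α → ℝ} (hw : Measurable w) : Measurable fun τ => G τ (w τ) :=
  (measurable_uncurry_of_continuous_of_measurable (u := fun ξ τ => G τ ξ) hG_cont hG_meas).comp
    (hw.prodMk measurable_id)

theorem measurable_of_hasDerivAt_of_measurable {α : Type*} [MeasurableSpace α]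
    {G G' : α → ℝ → ℝ} (hG : ∀ ξ, Measurable fun τ => G τ ξ)
    (hG' : ∀ τ ξ, HasDerivAt (G τ) (G' τ ξ) ξ) (ξ : ℝ) : Measurable fun τ => G' τ ξ := by
  have hinv : Tendsto (fun n : ℕ => (n : ℝ)⁻¹) atTop (𝓝[>] 0) :=
    tendsto_inv_atTop_nhdsGT_zero.comp tendsto_natCast_atTop_atTop
  refine measurable_of_tendsto_metrizable
    (f := fun (n : ℕ) τ => (n : ℝ)⁻¹⁻¹ • (G τ (ξ + (n : ℝ)⁻¹) - G τ ξ))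
    (fun n => ((hG _).fun_sub (hG _)).fun_const_smul _) (tendsto_pi_nhds.2 fun τ => ?_)
  exact (hG' τ ξ).tendsto_slope_zero_right.comp hinv

theorem exists_measurable_forall_mem_of_isOpen {α β : Type*} [MeasurableSpace α]
    [TopologicalSpace β] [TopologicalSpace.SeparableSpace β] [Nonempty β] [MeasurableSpace β]
    {U : α → Set β} (hU_open : ∀ a, IsOpen (U a)) (hU_ne : ∀ a, (U a).Nonempty)
    (hU_meas : ∀ ξ, MeasurableSet {a | ξ ∈ U a}) :
    ∃ θ : α → β, Measurable θ ∧ ∀ a, θ a ∈ U a := by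
  classical
  let u := TopologicalSpace.denseSeq β
  have hu : ∀ a, ∃ n, u n ∈ U a := fun a =>
    (TopologicalSpace.denseRange_denseSeq β).exists_mem_open (hU_open a) (hU_ne a)
  exact ⟨fun a => u (Nat.find (hu a)),
    measurable_from_nat.comp (measurable_find hu fun n => hU_meas _), fun a => Nat.find_spec (hu a)⟩

theorem exists_hasDerivAt_eq_div {f f' : ℝ → ℝ} (hf : ∀ ξ, HasDerivAt f (f' ξ) ξ) (h0 : f 0 = 0)
    {X : ℝ} (hX : X ≠ 0) : ∃ ξ, f' ξ = f X / X := by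
  have hcont : Continuous f := continuous_iff_continuousAt.2 fun ξ => (hf ξ).continuousAt
  rcases hX.lt_or_gt with hX | hX
  · obtain ⟨ξ, -, hξ⟩ := exists_hasDerivAt_eq_slope f f' hX hcont.continuousOn fun ξ _ => hf ξ
    exact ⟨ξ, by rw [hξ, h0, zero_sub, zero_sub, neg_div_neg_eq]⟩
  · obtain ⟨ξ, -, hξ⟩ := exists_hasDerivAt_eq_slope f f' hX hcont.continuousOn fun ξ _ => hf ξ
    exact ⟨ξ, by rw [hξ, h0, sub_zero, sub_zero]⟩

theorem log_sub_log_le_integral {f f' φ : ℝ → ℝ} {s t : ℝ} (hst : s ≤ t)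
    (hf : ∀ τ ∈ Icc s t, HasDerivAt f (f' τ) τ) (hne : ∀ τ ∈ Icc s t, f τ ≠ 0)
    (hφ : IntegrableOn φ (Icc s t)) (hle : ∀ τ ∈ Ioo s t, f' τ / f τ ≤ φ τ) :
    log (f t) - log (f s) ≤ ∫ τ in s..t, φ τ :=
  intervalIntegral.sub_le_integral_of_hasDeriv_right_of_le hst
    (fun τ hτ => ((hf τ hτ).log (hne τ hτ)).continuousAt.continuousWithinAt)
    (fun τ hτ => ((hf τ (Ioo_subset_Icc_self hτ)).log
      (hne τ (Ioo_subset_Icc_self hτ))).hasDerivWithinAt) hφ hle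

theorem integral_le_log_sub_log {f f' φ : ℝ → ℝ} {s t : ℝ} (hst : s ≤ t)
    (hf : ∀ τ ∈ Icc s t, HasDerivAt f (f' τ) τ) (hne : ∀ τ ∈ Icc s t, f τ ≠ 0)
    (hφ : IntegrableOn φ (Icc s t)) (hle : ∀ τ ∈ Ioo s t, φ τ ≤ f' τ / f τ) :
    ∫ τ in s..t, φ τ ≤ log (f t) - log (f s) :=
  intervalIntegral.integral_le_sub_of_hasDeriv_right_of_le hst
    (fun τ hτ => ((hf τ hτ).log (hne τ hτ)).continuousAt.continuousWithinAt)
    (fun τ hτ => ((hf τ (Ioo_subset_Icc_self hτ)).log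
      (hne τ (Ioo_subset_Icc_self hτ))).hasDerivWithinAt) hφ hle

theorem integral_exp_neg_le_one {s t : ℝ} (hs : 0 ≤ s) : ∫ τ in s..t, exp (-τ) ≤ 1 := by
  rw [intervalIntegral.integral_comp_neg (fun τ => exp τ), integral_exp]
  have : exp (-s) ≤ 1 := exp_le_one_iff.2 (by linarith)
  linarith [exp_pos (-t)]

theorem ContinuousOn.forall_ne_zero_of_abs_le_mul {α : Type*} [ConditionallyCompleteLinearOrder α]
    [TopologicalSpace α] [OrderTopology α] [DenselyOrdered α] {f L : α → ℝ} {a b : α}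
    (hf : ContinuousOn f (Icc a b)) (hL : ContinuousOn L (Icc a b)) (ha : f a ≠ 0)
    (hbound : ∀ s ∈ Icc a b, (∀ τ ∈ Icc a s, f τ ≠ 0) → |f a| ≤ L s * |f s|) :
    ∀ s ∈ Icc a b, f s ≠ 0 := by
  by_contra! hzero
  have hZ : IsClosed (Icc a b ∩ f ⁻¹' {0}) :=
    hf.preimage_isClosed_of_isClosed isClosed_Icc isClosed_singleton
  obtain ⟨c, ⟨hc, hfc⟩, hc_min⟩ :=
    (isCompact_Icc.of_isClosed_subset hZ inter_subset_left).exists_isLeast hzero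
  have hac : a ≠ c := by rintro rfl; exact ha hfc
  have hbelow : Ico a c ⊆ Icc a b ∩ {s | |f a| ≤ L s * |f s|} := fun s hs =>
    ⟨⟨hs.1, hs.2.le.trans hc.2⟩, hbound s ⟨hs.1, hs.2.le.trans hc.2⟩ fun τ hτ h0 =>
      (hc_min ⟨⟨hτ.1, hτ.2.trans (hs.2.le.trans hc.2)⟩, h0⟩).not_gt (hτ.2.trans_lt hs.2)⟩
  have hclosed : IsClosed (Icc a b ∩ {s | |f a| ≤ L s * |f s|}) :=
    (hL.mul hf.abs).preimage_isClosed_of_isClosed isClosed_Icc isClosed_Ici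
  have hLc : |f a| ≤ L c * |f c| :=
    (hclosed.closure_subset_iff.2 hbelow (by rw [closure_Ico hac]; exact right_mem_Icc.2 hc.1)).2
  rw [show f c = 0 from hfc, abs_zero, mul_zero] at hLc
  exact ha (abs_nonpos_iff.1 hLc)

theorem ContinuousOn.eq_zero_of_abs_le_mul {f L : ℝ → ℝ} {a b : ℝ}
    (hf : ContinuousOn f (Icc a b)) (hL : ContinuousOn L (Icc a b)) (ha : f a = 0) (hab : a ≤ b)
    (hbound : ∀ s ∈ Icc a b, (∀ τ ∈ Icc s b, f τ ≠ 0) → |f b| ≤ L s * |f s|) : f b = 0 := by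
  by_contra hb
  have hdual {φ : ℝ → ℝ} (hφ : ContinuousOn φ (Icc a b)) :
      ContinuousOn (φ ∘ OrderDual.ofDual) (Icc (OrderDual.toDual b) (OrderDual.toDual a)) := by
    rw [Icc_toDual]
    exact hφ.comp continuous_ofDual.continuousOn fun _ h => h
  refine (hdual hf).forall_ne_zero_of_abs_le_mul (hdual hL) hb (fun s hs hne => ?_)
    (OrderDual.toDual a) (by simp [hab]) ha
  exact hbound s (by rwa [Icc_toDual] at hs) fun τ hτ => hne (OrderDual.toDual τ) ⟨hτ.2, hτ.1⟩

theorem abs_le_exp_mul_exp_integral_mul_abs {x x' φ : ℝ → ℝ} {s t : ℝ} (hs : 0 ≤ s) (hst : s ≤ t)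
    (hx : ∀ τ ∈ Icc s t, HasDerivAt x (x' τ) τ) (hne : ∀ τ ∈ Icc s t, x τ ≠ 0)
    (hφ : IntegrableOn φ (Icc s t)) (hnear : ∀ τ ∈ Icc s t, |φ τ - x' τ / x τ| < exp (-τ)) :
    |x t| ≤ exp 1 * exp (∫ τ in s..t, φ τ) * |x s| := by
  have hexp : Continuous fun τ => exp (-τ) := continuous_exp.comp continuous_neg
  have hlog := log_sub_log_le_integral (φ := fun τ => φ τ + exp (-τ)) hst hx hne
    (hφ.add hexp.integrableOn_Icc) fun τ hτ => by
      linarith [(abs_sub_lt_iff.1 (hnear τ (Ioo_subset_Icc_self hτ))).2]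
  rw [intervalIntegral.integral_add ((intervalIntegrable_iff_integrableOn_Icc_of_le hst).2 hφ)
    (hexp.intervalIntegrable s t)] at hlog
  have h1 := integral_exp_neg_le_one (t := t) hs
  calc |x t| = exp (log (x t)) := (exp_log_eq_abs (hne t ⟨hst, le_rfl⟩)).symm
    _ ≤ exp (1 + (∫ τ in s..t, φ τ) + log (x s)) := exp_le_exp.2 (by linarith)
    _ = exp 1 * exp (∫ τ in s..t, φ τ) * |x s| := by
      rw [exp_add, exp_add, exp_log_eq_abs (hne s ⟨le_rfl, hst⟩)]

theorem abs_le_exp_mul_abs {x x' φ : ℝ → ℝ} {s t M : ℝ} (hs : 0 ≤ s) (hst : s ≤ t)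
    (hx : ∀ τ ∈ Icc s t, HasDerivAt x (x' τ) τ) (hne : ∀ τ ∈ Icc s t, x τ ≠ 0)
    (hφ : ∀ τ ∈ Icc s t, |φ τ| ≤ M) (hnear : ∀ τ ∈ Icc s t, |φ τ - x' τ / x τ| < exp (-τ)) :
    |x s| ≤ exp ((M + 1) * (t - s)) * |x t| := by
  have hlog := integral_le_log_sub_log hst hx hne
    (integrableOn_const (C := -(M + 1)) measure_Icc_lt_top.ne) fun τ hτ => by
      have hτ' := Ioo_subset_Icc_self hτ
      linarith [(abs_sub_lt_iff.1 (hnear τ hτ')).1, (abs_le.1 (hφ τ hτ')).1,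
        exp_le_one_iff.2 (neg_nonpos.2 (hs.trans hτ'.1))]
  rw [intervalIntegral.integral_const, smul_eq_mul] at hlog
  calc |x s| = exp (log (x s)) := (exp_log_eq_abs (hne s ⟨le_rfl, hst⟩)).symm
    _ ≤ exp ((M + 1) * (t - s) + log (x t)) := exp_le_exp.2 (by linarith)
    _ = exp ((M + 1) * (t - s)) * |x t| := by rw [exp_add, exp_log_eq_abs (hne t ⟨hst, le_rfl⟩)]

theorem ContinuousOn.measurable_comp_max {f : ℝ → ℝ} {a : ℝ} (hf : ContinuousOn f (Ici a)) :
    Measurable fun τ => f (max τ a) :=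
  (hf.comp_continuous (continuous_id.max continuous_const) fun τ => le_max_right τ a).measurable

section PartialDerivative

variable {g g₂ : ℝ → ℝ → ℝ}

/- The hypotheses only control `g` for `t ≥ 0`; clamping time to `max τ 0` gives functions that
are measurable on all of `ℝ` and agree with the original ones on `[0, ∞)`. -/
theorem measurable_partialDeriv_comp_max (hg_cont : ∀ x : ℝ, ContinuousOn (fun t => g t x) (Ici 0))
    (hg_deriv : ∀ t ≥ (0:ℝ), ∀ x : ℝ, HasDerivAt (g t) (g₂ t x) x)
    (hg₂_cont : ∀ t ≥ (0:ℝ), Continuous (g₂ t)) {θ : ℝ → ℝ} (hθ : Measurable θ) :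
    Measurable fun τ => g₂ (max τ 0) (θ τ) :=
  measurable_apply_of_continuous_of_measurable
    (measurable_of_hasDerivAt_of_measurable (fun ξ => (hg_cont ξ).measurable_comp_max)
      fun τ => hg_deriv _ (le_max_right τ 0))
    (fun τ => hg₂_cont _ (le_max_right τ 0)) hθ

theorem integrableOn_partialDeriv_comp (hg_cont : ∀ x : ℝ, ContinuousOn (fun t => g t x) (Ici 0))
    (hg_deriv : ∀ t ≥ (0:ℝ), ∀ x : ℝ, HasDerivAt (g t) (g₂ t x) x)
    (hg₂_cont : ∀ t ≥ (0:ℝ), Continuous (g₂ t)) {θ : ℝ → ℝ} (hθ : Measurable θ) {M : ℝ}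
    (hM : ∀ t ≥ (0:ℝ), |g₂ t (θ t)| ≤ M) {s t : ℝ} (hs : 0 ≤ s) :
    IntegrableOn (fun τ => g₂ τ (θ τ)) (Icc s t) := by
  have hmax : ∀ τ ∈ Icc s t, max τ 0 = τ := fun τ hτ => max_eq_left (hs.trans hτ.1)
  refine IntegrableOn.of_bound measure_Icc_lt_top ?_ M ?_
  · exact (measurable_partialDeriv_comp_max hg_cont hg_deriv hg₂_cont hθ).aestronglyMeasurable.congr
      (ae_restrict_of_forall_mem measurableSet_Icc fun τ hτ => by simp only [hmax τ hτ])
  · exact ae_restrict_of_forall_mem measurableSet_Icc fun τ hτ => hM τ (hs.trans hτ.1)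

theorem exists_measurable_partialDeriv_near_div
    (hg_cont : ∀ x : ℝ, ContinuousOn (fun t => g t x) (Ici 0))
    (hg_deriv : ∀ t ≥ (0:ℝ), ∀ x : ℝ, HasDerivAt (g t) (g₂ t x) x)
    (hg₂_cont : ∀ t ≥ (0:ℝ), Continuous (g₂ t)) (hg0 : ∀ t ≥ (0:ℝ), g t 0 = 0)
    {X : ℝ → ℝ} (hX : Measurable X) :
    ∃ θ : ℝ → ℝ, Measurable θ ∧
      ∀ τ ≥ (0:ℝ), X τ ≠ 0 → |g₂ τ (θ τ) - g τ (X τ) / X τ| < exp (-τ) := by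
  have hquot : Measurable fun τ => g (max τ 0) (X τ) / X τ :=
    (measurable_apply_of_continuous_of_measurable (fun ξ => (hg_cont ξ).measurable_comp_max)
      (fun τ => continuous_iff_continuousAt.2 fun ξ =>
        (hg_deriv _ (le_max_right τ 0) ξ).continuousAt) hX).div hX
  -- The guard `X τ ≠ 0 →` keeps `U τ` nonempty where the mean value theorem gives nothing.
  refine (exists_measurable_forall_mem_of_isOpen
    (U := fun τ => {ξ | X τ ≠ 0 → |g₂ (max τ 0) ξ - g (max τ 0) (X τ) / X τ| < exp (-τ)})
    (fun τ => ?_) (fun τ => ?_) (fun ξ => ?_)).imp fun θ ⟨hθ, hθU⟩ =>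
      ⟨hθ, fun τ hτ hXτ => by simpa only [max_eq_left hτ] using hθU τ hXτ⟩
  · by_cases h : X τ = 0
    · simp [h]
    · simp only [ne_eq, h, not_false_eq_true, forall_const]
      exact isOpen_lt ((hg₂_cont _ (le_max_right τ 0)).sub continuous_const).abs continuous_const
  · by_cases h : X τ = 0
    · exact ⟨0, fun h' => absurd h h'⟩
    · obtain ⟨ξ, hξ⟩ := exists_hasDerivAt_eq_div (hg_deriv _ (le_max_right τ 0))
        (hg0 _ (le_max_right τ 0)) h
      exact ⟨ξ, fun _ => by simp [hξ, exp_pos]⟩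
  · have hpartial := measurable_partialDeriv_comp_max hg_cont hg_deriv hg₂_cont
      (measurable_const (a := ξ))
    exact (hX (measurableSet_singleton 0).compl).imp
      (measurableSet_lt (hpartial.sub hquot).abs (measurable_exp.comp measurable_neg))

end PartialDerivative

/-- The nonautonomous Markus–Yamabe conjecture in dimension `n = 1`:
if the exponential dichotomy spectrum on `[0,∞)` of every linearization
`ż = ∂₂g(t, θ(t)) z` along measurable functions is contained in `(-∞, 0)`
(expressed via the equivalent exponential estimate), then every solution of
`ẋ = g(t,x)` decays exponentially; the trivial solution is globally uniformly
asymptotically stable. -/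
theorem nonautonomous_markus_yamabe_dim_one
    (g g₂ : ℝ → ℝ → ℝ)
    (hg_cont : ∀ x : ℝ, ContinuousOn (fun t => g t x) (Ici 0))
    (hg_deriv : ∀ t ≥ (0:ℝ), ∀ x : ℝ, HasDerivAt (g t) (g₂ t x) x)
    (hg₂_cont : ∀ t ≥ (0:ℝ), Continuous (g₂ t))
    (hg0 : ∀ t ≥ (0:ℝ), ∀ x : ℝ, g t x = 0 ↔ x = 0)
    (hbound : ∀ y : ℝ → ℝ, Measurable y →
      ∃ M : ℝ, ∀ t ≥ (0:ℝ), |g₂ t (y t)| ≤ M)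
    (hspec : ∀ θ : ℝ → ℝ, Measurable θ →
      ∃ K ≥ (1:ℝ), ∃ α > (0:ℝ), ∀ s t : ℝ, 0 ≤ s → s ≤ t →
        exp (∫ τ in s..t, g₂ τ (θ τ)) ≤ K * exp (-α * (t - s))) :
    ∀ t₀ ≥ (0:ℝ), ∀ (x₀ : ℝ) (x : ℝ → ℝ), x t₀ = x₀ →
      (∀ t ≥ t₀, HasDerivAt x (g t (x t)) t) →
      ∃ K ≥ (1:ℝ), ∃ α > (0:ℝ), ∀ t ≥ t₀,
        |x t| ≤ K * exp (-α * (t - t₀)) * |x₀| := by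
  intro t₀ ht₀ x₀ x hx₀ hx
  have hxc : ContinuousOn x (Ici t₀) := fun τ hτ => (hx τ hτ).continuousAt.continuousWithinAt
  obtain ⟨θ, hθ, hθX⟩ := exists_measurable_partialDeriv_near_div hg_cont hg_deriv hg₂_cont
    (fun t ht => (hg0 t ht 0).2 rfl) hxc.measurable_comp_max
  have hθx : ∀ τ ≥ t₀, x τ ≠ 0 → |g₂ τ (θ τ) - g τ (x τ) / x τ| < exp (-τ) := fun τ hτ => by
    simpa only [max_eq_left hτ] using hθX τ (ht₀.trans hτ)
  obtain ⟨M, hM⟩ := hbound θ hθ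
  obtain ⟨K, hK, α, hα, hKα⟩ := hspec θ hθ
  have hupper : ∀ s ≥ t₀, ∀ t ≥ s, (∀ τ ∈ Icc s t, x τ ≠ 0) →
      |x t| ≤ exp 1 * K * exp (-α * (t - s)) * |x s| := fun s hs t hst hne => by
    refine (abs_le_exp_mul_exp_integral_mul_abs (ht₀.trans hs) hst
      (fun τ hτ => hx τ (hs.trans hτ.1)) hne
      (integrableOn_partialDeriv_comp hg_cont hg_deriv hg₂_cont hθ hM (ht₀.trans hs))
      fun τ hτ => hθx τ (hs.trans hτ.1) (hne τ hτ)).trans ?_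
    rw [mul_assoc (exp 1) K]
    gcongr
    exact hKα s t (ht₀.trans hs) hst
  have hlower : ∀ s ≥ t₀, ∀ t ≥ s, (∀ τ ∈ Icc s t, x τ ≠ 0) →
      |x s| ≤ exp ((M + 1) * (t - s)) * |x t| := fun s hs t hst hne =>
    abs_le_exp_mul_abs (ht₀.trans hs) hst (fun τ hτ => hx τ (hs.trans hτ.1)) hne
      (fun τ hτ => hM τ (ht₀.trans (hs.trans hτ.1))) fun τ hτ => hθx τ (hs.trans hτ.1) (hne τ hτ)
  refine ⟨exp 1 * K, one_le_mul_of_one_le_of_one_le (one_le_exp zero_le_one) hK, α, hα,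
    fun t ht => ?_⟩
  rcases eq_or_ne x₀ 0 with h0 | h0
  · have hxt : x t = 0 := (hxc.mono Icc_subset_Ici_self).eq_zero_of_abs_le_mul (by fun_prop)
      (hx₀.trans h0) ht fun s hs hne => hupper s hs.1 t hs.2 hne
    simp [hxt, h0]
  · rw [← hx₀]
    exact hupper t₀ le_rfl t ht <| (hxc.mono Icc_subset_Ici_self).forall_ne_zero_of_abs_le_mul
      (by fun_prop) (hx₀ ▸ h0) fun s hs hne => hlower t₀ le_rfl s hs.1 hne
end

section
/- Let A : [0,∞) → Matrix (Fin n) (Fin n) ℝ be bounded and continuous, and let Φ be a fundamental matrix of ẋ = A(t)x (Φ'(t) = A(t)Φ(t), Φ(0) = I, Φ(t) invertible) satisfying ‖Φ(t)Φ(s)⁻¹‖ ≤ K e^{-α(t-s)} for all t ≥ s ≥ 0, with constants K ≥ 1 and α > 0 (exponential dichotomy on [0,∞) with projector P = I). Let f : [0,∞) × ℝⁿ → ℝⁿ be continuous in t and C¹ in x, with f(t,x) = 0 if and only if x = 0 (for all t ≥ 0), and suppose the Jacobian of f in x satisfies sup_{t ≥ 0, x ∈ ℝⁿ} ‖D_x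 f(t,x)‖ < α/(4K²). Then every solution x(·) of ẋ = A(t)x + f(t,x) with x(t₀) = ξ satisfies |x(t)| ≤ K e^{-α(1 - 1/(4K))(t - t₀)} |ξ| for all t ≥ t₀ ≥ 0; in particular the trivial solution is globally uniformly asymptotically stable. -/
/-!
By variation of constants,
`x t = Φ t (Φ t₀)⁻¹ ξ + ∫_{t₀}^t Φ t (Φ s)⁻¹ f(s, x s) ds`.
Since `f s 0 = 0` and `‖D_x f‖ ≤ c`, the mean value theorem gives `‖f(s, u)‖ ≤ c ‖u‖`, so the
dichotomy bound turns this into an integral inequality for `e^{α(t - t₀)} ‖x t‖`, and Grönwall's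
inequality yields `‖x t‖ ≤ K e^{(Kc - α)(t - t₀)} ‖ξ‖`. Finally `c < α / (4K²)` means
`Kc - α < -α (1 - 1/(4K))`.
-/

open Real Set Matrix MeasureTheory

attribute [local instance] Matrix.linftyOpNormedRing Matrix.linftyOpNormedSpace

attribute [local instance] Matrix.linftyOpNormedAlgebra

theorem le_mul_exp_of_le_add_mul_integral {v : ℝ → ℝ} {C L a b : ℝ}
    (hv : ContinuousOn v (Icc a b)) (hL : 0 ≤ L)
    (h : ∀ t ∈ Icc a b, v t ≤ C + L * ∫ s in a..t, v s) :
    ∀ t ∈ Icc a b, v t ≤ C * exp (L * (t - a)) := by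
  set W : ℝ → ℝ := fun t => C + L * ∫ s in a..t, v s
  have hW_cont : ContinuousOn W (Icc a b) := by
    rcases le_or_gt a b with hab | hab
    · have := intervalIntegral.continuousOn_primitive_interval
        (μ := volume) (hv.integrableOn_Icc.mono_set (uIcc_of_le hab).subset)
      rw [uIcc_of_le hab] at this
      exact continuousOn_const.add (continuousOn_const.mul this)
    · simp [Icc_eq_empty_of_lt hab]
  have hW_deriv : ∀ t ∈ Ico a b, HasDerivWithinAt W (L * v t) (Ici t) t := by
    intro t ht
    have hmem : Icc a b ∈ nhdsWithin t (Ioi t) :=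
      mem_nhdsWithin.mpr ⟨Iio b, isOpen_Iio, ht.2, fun r hr => ⟨ht.1.trans hr.2.le, hr.1.le⟩⟩
    have hint : IntervalIntegrable v volume a t :=
      ContinuousOn.intervalIntegrable_of_Icc ht.1 (hv.mono (Icc_subset_Icc_right ht.2.le))
    exact ((intervalIntegral.integral_hasDerivWithinAt_right hint
      ⟨Icc a b, hmem, hv.aestronglyMeasurable measurableSet_Icc⟩
      ((hv t (Ico_subset_Icc_self ht)).mono_of_mem_nhdsWithin hmem)).const_mul L).const_add C
  have hW_le : ∀ t ∈ Icc a b, W t ≤ gronwallBound C L 0 (t - a) :=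
    le_gronwallBound_of_liminf_deriv_right_le hW_cont
      (fun t ht _ hr => (hW_deriv t ht).liminf_right_slope_le hr) (by simp [W])
      (fun t ht => by
        rw [add_zero]
        exact mul_le_mul_of_nonneg_left (h t (Ico_subset_Icc_self ht)) hL)
  intro t ht
  simpa [gronwallBound_ε0] using (h t ht).trans (hW_le t ht)

theorem ContinuousOn.apply_of_lipschitzWith {α E F : Type*} [TopologicalSpace α]
    [PseudoEMetricSpace E] [PseudoEMetricSpace F] {f : α → E → F} {x : α → E} {S : Set α}
    {L : NNReal} (hx : ContinuousOn x S) (hf : ∀ u, ContinuousOn (fun t => f t u) S)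
    (hL : ∀ t ∈ S, LipschitzWith L (f t)) : ContinuousOn (fun t => f t (x t)) S :=
  (continuousOn_prod_of_continuousOn_lipschitzOnWith' (fun p : α × E => f p.1 p.2) L
    (fun t ht => (hL t ht).lipschitzOnWith) (fun u _ => hf u)).comp
    (continuousOn_id.prodMk hx) (fun _ ht => ⟨ht, mem_univ _⟩)

theorem Matrix.mulVec_intervalIntegral {ι : Type*} [Fintype ι] {Φ : Matrix ι ι ℝ}
    {g : ℝ → ι → ℝ} {a b : ℝ} (hg : IntervalIntegrable g volume a b) :
    Φ *ᵥ ∫ s in a..b, g s = ∫ s in a..b, Φ *ᵥ g s :=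
  ((mulVecBilin ℝ ℝ).toContinuousBilinearMap Φ).intervalIntegral_comp_comm hg |>.symm

section

-- `DecidableEq ι` is what makes the local operator-norm instances apply to `Matrix ι ι ℝ`.
variable {ι : Type*} [Fintype ι] [DecidableEq ι]

theorem HasDerivAt.matrix_mulVec {Φ : ℝ → Matrix ι ι ℝ} {x : ℝ → ι → ℝ}
    {Φ' : Matrix ι ι ℝ} {x' : ι → ℝ} {t : ℝ} (hΦ : HasDerivAt Φ Φ' t) (hx : HasDerivAt x x' t) :
    HasDerivAt (fun s => Φ s *ᵥ x s) (Φ t *ᵥ x' + Φ' *ᵥ x t) t :=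
  ((mulVecBilin ℝ ℝ).toContinuousBilinearMap.hasDerivAt_of_bilinear
    (fun _ => hΦ) (fun _ => hx) :)

theorem HasDerivAt.matrix_inv {Φ : ℝ → Matrix ι ι ℝ} {Φ' : Matrix ι ι ℝ} {t : ℝ}
    (hΦ : HasDerivAt Φ Φ' t) (hu : IsUnit (Φ t)) :
    HasDerivAt (fun s => (Φ s)⁻¹) (-((Φ t)⁻¹ * Φ' * (Φ t)⁻¹)) t := by
  obtain ⟨u, hu⟩ := hu
  simp only [nonsing_inv_eq_ringInverse, ← hu, Ring.inverse_unit]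
  have := (hu ▸ hasFDerivAt_ringInverse (𝕜 := ℝ) u).comp_hasDerivAt t hΦ
  exact this.congr_deriv (by simp [mul_assoc])

theorem ContinuousOn.matrix_mulVec {α : Type*} [TopologicalSpace α] {Ψ : α → Matrix ι ι ℝ}
    {g : α → ι → ℝ} {S : Set α} (hΨ : ContinuousOn Ψ S) (hg : ContinuousOn g S) :
    ContinuousOn (fun s => Ψ s *ᵥ g s) S :=
  ((mulVecBilin ℝ ℝ).toContinuousBilinearMap.continuous₂.comp_continuousOn
    (hΨ.prodMk hg) :)

theorem eq_mulVec_add_integral_of_hasDerivAt {A Φ : ℝ → Matrix ι ι ℝ} {x g : ℝ → ι → ℝ}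
    {t₀ t : ℝ} (ht : t₀ ≤ t)
    (hΦ : ∀ s ∈ Icc t₀ t, HasDerivAt Φ (A s * Φ s) s) (hΦ_inv : ∀ s ∈ Icc t₀ t, IsUnit (Φ s))
    (hx : ∀ s ∈ Icc t₀ t, HasDerivAt x (A s *ᵥ x s + g s) s) (hg : ContinuousOn g (Icc t₀ t)) :
    x t = (Φ t * (Φ t₀)⁻¹) *ᵥ x t₀ + ∫ s in t₀..t, (Φ t * (Φ s)⁻¹) *ᵥ g s := by
  have hΦ_inv_deriv : ∀ s ∈ Icc t₀ t, HasDerivAt (fun r => (Φ r)⁻¹) (-((Φ s)⁻¹ * A s)) s := by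
    intro s hs
    refine ((hΦ s hs).matrix_inv (hΦ_inv s hs)).congr_deriv ?_
    rw [mul_assoc, mul_assoc, mul_nonsing_inv _ ((hΦ_inv s hs).map Matrix.detMonoidHom), mul_one]
  have hy : ∀ s ∈ uIcc t₀ t, HasDerivAt (fun r => (Φ r)⁻¹ *ᵥ x r) ((Φ s)⁻¹ *ᵥ g s) s := by
    intro s hs
    rw [uIcc_of_le ht] at hs
    refine ((hΦ_inv_deriv s hs).matrix_mulVec (hx s hs)).congr_deriv ?_
    rw [mulVec_add, neg_mulVec, ← mulVec_mulVec]
    abel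
  have hint : IntervalIntegrable (fun s => (Φ s)⁻¹ *ᵥ g s) volume t₀ t := by
    refine ContinuousOn.intervalIntegrable ?_
    rw [uIcc_of_le ht]
    exact ContinuousOn.matrix_mulVec
      (fun s hs => (hΦ_inv_deriv s hs).continuousAt.continuousWithinAt) hg
  have hΦt : Φ t * (Φ t)⁻¹ = 1 :=
    mul_nonsing_inv _ ((hΦ_inv t ⟨ht, le_rfl⟩).map Matrix.detMonoidHom)
  calc x t = Φ t *ᵥ ((Φ t)⁻¹ *ᵥ x t) := by rw [mulVec_mulVec, hΦt, one_mulVec]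
    _ = Φ t *ᵥ ((Φ t₀)⁻¹ *ᵥ x t₀ + ∫ s in t₀..t, (Φ s)⁻¹ *ᵥ g s) := by
      rw [intervalIntegral.integral_eq_sub_of_hasDerivAt hy hint, add_sub_cancel]
    _ = _ := by
      simp only [mulVec_add, mulVec_intervalIntegral hint, mulVec_mulVec]

theorem norm_le_exp_add_integral_of_dichotomy {A Φ : ℝ → Matrix ι ι ℝ}
    {x g : ℝ → ι → ℝ} {t₀ t K α c : ℝ} (ht : t₀ ≤ t)
    (hΦ : ∀ s ∈ Icc t₀ t, HasDerivAt Φ (A s * Φ s) s) (hΦ_inv : ∀ s ∈ Icc t₀ t, IsUnit (Φ s))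
    (hED : ∀ s ∈ Icc t₀ t, ‖Φ t * (Φ s)⁻¹‖ ≤ K * exp (-α * (t - s)))
    (hx : ∀ s ∈ Icc t₀ t, HasDerivAt x (A s *ᵥ x s + g s) s) (hg : ContinuousOn g (Icc t₀ t))
    (hgx : ∀ s ∈ Icc t₀ t, ‖g s‖ ≤ c * ‖x s‖) :
    ‖x t‖ ≤ K * exp (-α * (t - t₀)) * ‖x t₀‖ +
      ∫ s in t₀..t, K * c * exp (-α * (t - s)) * ‖x s‖ := by
  have hx_cont : ContinuousOn x (Icc t₀ t) := fun s hs =>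
    (hx s hs).continuousAt.continuousWithinAt
  have hbound_int : IntervalIntegrable (fun s => K * c * exp (-α * (t - s)) * ‖x s‖)
      volume t₀ t :=
    ContinuousOn.intervalIntegrable_of_Icc ht
      ((Continuous.continuousOn (by fun_prop)).mul hx_cont.norm)
  rw [eq_mulVec_add_integral_of_hasDerivAt ht hΦ hΦ_inv hx hg]
  refine (norm_add_le _ _).trans (add_le_add ?_ ?_)
  · exact (linfty_opNorm_mulVec _ _).trans
      (mul_le_mul_of_nonneg_right (hED t₀ ⟨le_rfl, ht⟩) (norm_nonneg _))
  · refine intervalIntegral.norm_integral_le_of_norm_le ht (ae_of_all _ fun s hs => ?_)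
      hbound_int
    have hs' : s ∈ Icc t₀ t := Ioc_subset_Icc_self hs
    calc ‖(Φ t * (Φ s)⁻¹) *ᵥ g s‖ ≤ ‖Φ t * (Φ s)⁻¹‖ * ‖g s‖ := linfty_opNorm_mulVec _ _
      _ ≤ K * exp (-α * (t - s)) * (c * ‖x s‖) :=
        mul_le_mul (hED s hs') (hgx s hs') (norm_nonneg _) ((norm_nonneg _).trans (hED s hs'))
      _ = K * c * exp (-α * (t - s)) * ‖x s‖ := by ring

theorem norm_le_exp_of_dichotomy {A Φ : ℝ → Matrix ι ι ℝ}
    {x g : ℝ → ι → ℝ} {t₀ T K α c : ℝ} (hT : t₀ ≤ T) (hK : 0 ≤ K) (hc : 0 ≤ c)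
    (hΦ : ∀ s ∈ Icc t₀ T, HasDerivAt Φ (A s * Φ s) s) (hΦ_inv : ∀ s ∈ Icc t₀ T, IsUnit (Φ s))
    (hED : ∀ s t, t₀ ≤ s → s ≤ t → t ≤ T → ‖Φ t * (Φ s)⁻¹‖ ≤ K * exp (-α * (t - s)))
    (hx : ∀ s ∈ Icc t₀ T, HasDerivAt x (A s *ᵥ x s + g s) s) (hg : ContinuousOn g (Icc t₀ T))
    (hgx : ∀ s ∈ Icc t₀ T, ‖g s‖ ≤ c * ‖x s‖) :
    ‖x T‖ ≤ K * exp ((K * c - α) * (T - t₀)) * ‖x t₀‖ := by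
  set v : ℝ → ℝ := fun s => exp (α * (s - t₀)) * ‖x s‖
  have hv_cont : ContinuousOn v (Icc t₀ T) :=
    (Continuous.continuousOn (by fun_prop)).mul
      (fun s hs => (hx s hs).continuousAt.continuousWithinAt.norm)
  have hv : ∀ t ∈ Icc t₀ T, v t ≤ K * ‖x t₀‖ + K * c * ∫ s in t₀..t, v s := by
    intro t ht
    have hsub : Icc t₀ t ⊆ Icc t₀ T := Icc_subset_Icc_right ht.2
    have h := mul_le_mul_of_nonneg_left
      (norm_le_exp_add_integral_of_dichotomy ht.1 (fun s hs => hΦ s (hsub hs))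
        (fun s hs => hΦ_inv s (hsub hs)) (fun s hs => hED s t hs.1 hs.2 ht.2)
        (fun s hs => hx s (hsub hs)) (hg.mono hsub) (fun s hs => hgx s (hsub hs)))
      (exp_pos (α * (t - t₀))).le
    refine h.trans_eq ?_
    rw [mul_add, ← intervalIntegral.integral_const_mul, ← intervalIntegral.integral_const_mul]
    congr 1
    · rw [neg_mul, exp_neg]
      field_simp
    · refine intervalIntegral.integral_congr fun s _ => ?_
      simp only [v]
      rw [show α * (s - t₀) = α * (t - t₀) + -α * (t - s) by ring, exp_add]
      ring
  have hvT := le_mul_exp_of_le_add_mul_integral hv_cont (by positivity) hv T ⟨hT, le_rfl⟩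
  calc ‖x T‖ = exp (-α * (T - t₀)) * v T := by
        simp only [v]
        rw [neg_mul, exp_neg]
        field_simp
    _ ≤ exp (-α * (T - t₀)) * (K * ‖x t₀‖ * exp (K * c * (T - t₀))) := by gcongr
    _ = K * exp ((K * c - α) * (T - t₀)) * ‖x t₀‖ := by
        rw [show (K * c - α) * (T - t₀) = -α * (T - t₀) + K * c * (T - t₀) by ring, exp_add]
        ring

end

theorem perturbed_linear_system_uniform_asymptotic_stability_general
    (n : ℕ)
    (A : ℝ → Matrix (Fin n) (Fin n) ℝ)
    (Φ : ℝ → Matrix (Fin n) (Fin n) ℝ)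
    (hΦ_deriv : ∀ t : ℝ, HasDerivAt Φ (A t * Φ t) t)
    (hΦ_inv : ∀ t : ℝ, IsUnit (Φ t))
    (K α : ℝ) (hK : 1 ≤ K)
    (hED : ∀ s t : ℝ, 0 ≤ s → s ≤ t → ‖Φ t * (Φ s)⁻¹‖ ≤ K * exp (-α * (t - s)))
    (f : ℝ → (Fin n → ℝ) → (Fin n → ℝ))
    (Df : ℝ → (Fin n → ℝ) → ((Fin n → ℝ) →L[ℝ] (Fin n → ℝ)))
    (hf_cont : ∀ x : Fin n → ℝ, ContinuousOn (fun t => f t x) (Ici 0))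
    (hf_deriv : ∀ t ≥ (0:ℝ), ∀ x : Fin n → ℝ, HasFDerivAt (f t) (Df t x) x)
    (hf0 : ∀ t ≥ (0:ℝ), ∀ x : Fin n → ℝ, f t x = 0 ↔ x = 0)
    (hDf_small : ∃ c : ℝ, c < α / (4 * K ^ 2) ∧ ∀ t ≥ (0:ℝ), ∀ x : Fin n → ℝ, ‖Df t x‖ ≤ c) :
    ∀ t₀ ≥ (0:ℝ), ∀ (ξ : Fin n → ℝ) (x : ℝ → Fin n → ℝ), x t₀ = ξ →
      (∀ t ≥ t₀, HasDerivAt x (A t *ᵥ x t + f t (x t)) t) →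
      ∀ t ≥ t₀, ‖x t‖ ≤ K * exp (-α * (1 - 1 / (4 * K)) * (t - t₀)) * ‖ξ‖ := by
  intro t₀ ht₀ ξ x hxξ hx T hT
  obtain ⟨c, hc, hDf_le⟩ := hDf_small
  have hK0 : 0 < K := one_pos.trans_le hK
  have hc0 : 0 ≤ c := (norm_nonneg _).trans (hDf_le 0 le_rfl 0)
  have hLip : ∀ s ≥ (0:ℝ), LipschitzWith c.toNNReal (f s) := fun s hs =>
    lipschitzWith_of_nnnorm_fderiv_le (fun u => (hf_deriv s hs u).differentiableAt) fun u => by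
      rw [(hf_deriv s hs u).fderiv, ← norm_toNNReal]
      exact Real.toNNReal_le_toNNReal (hDf_le s hs u)
  have hf_le : ∀ s ≥ (0:ℝ), ∀ u, ‖f s u‖ ≤ c * ‖u‖ := fun s hs u => by
    simpa [(hf0 s hs 0).mpr rfl, dist_eq_norm, Real.coe_toNNReal _ hc0] using
      (hLip s hs).dist_le_mul u 0
  have hfx : ContinuousOn (fun s => f s (x s)) (Icc t₀ T) :=
    ContinuousOn.apply_of_lipschitzWith (fun s hs => (hx s hs.1).continuousAt.continuousWithinAt)
      (fun u => (hf_cont u).mono fun s hs => ht₀.trans hs.1) fun s hs => hLip s (ht₀.trans hs.1)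
  have hrate : K * c - α ≤ -α * (1 - 1 / (4 * K)) := by
    have : K * c < α / (4 * K) := by
      calc K * c < K * (α / (4 * K ^ 2)) := mul_lt_mul_of_pos_left hc hK0
        _ = α / (4 * K) := by field_simp
    have : -α * (1 - 1 / (4 * K)) = α / (4 * K) - α := by field_simp; ring
    linarith
  calc ‖x T‖ ≤ K * exp ((K * c - α) * (T - t₀)) * ‖x t₀‖ :=
        norm_le_exp_of_dichotomy hT hK0.le hc0 (fun s _ => hΦ_deriv s) (fun s _ => hΦ_inv s)
          (fun s t hs hst _ => hED s t (ht₀.trans hs) hst) (fun s hs => hx s hs.1) hfx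
          fun s hs => hf_le s (ht₀.trans hs.1) (x s)
    _ ≤ K * exp (-α * (1 - 1 / (4 * K)) * (T - t₀)) * ‖ξ‖ := by
        rw [hxξ]
        gcongr

/-- If `ẋ = A(t)x` has an exponential dichotomy on `[0,∞)` with projector `P = I`
and constants `K ≥ 1`, `α > 0`, and the nonlinearity `f` vanishes exactly at the
origin with Jacobian bounded by `α/(4K²)`, then every solution of
`ẋ = A(t)x + f(t,x)` satisfies `‖x(t)‖ ≤ K e^{-α(1 - 1/(4K))(t-t₀)} ‖ξ‖`;
the trivial solution is globally uniformly asymptotically stable. -/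
theorem perturbed_linear_system_uniform_asymptotic_stability
    (n : ℕ)
    (A : ℝ → Matrix (Fin n) (Fin n) ℝ)
    (hA_cont : ContinuousOn A (Ici 0))
    (hA_bdd : ∃ M : ℝ, ∀ t ≥ (0:ℝ), ‖A t‖ ≤ M)
    (Φ : ℝ → Matrix (Fin n) (Fin n) ℝ)
    (hΦ_deriv : ∀ t : ℝ, HasDerivAt Φ (A t * Φ t) t)
    (hΦ0 : Φ 0 = 1)
    (hΦ_inv : ∀ t : ℝ, IsUnit (Φ t))
    (K α : ℝ) (hK : 1 ≤ K) (hα : 0 < α)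
    (hED : ∀ s t : ℝ, 0 ≤ s → s ≤ t → ‖Φ t * (Φ s)⁻¹‖ ≤ K * exp (-α * (t - s)))
    (f : ℝ → (Fin n → ℝ) → (Fin n → ℝ))
    (Df : ℝ → (Fin n → ℝ) → ((Fin n → ℝ) →L[ℝ] (Fin n → ℝ)))
    (hf_cont : ∀ x : Fin n → ℝ, ContinuousOn (fun t => f t x) (Ici 0))
    (hf_deriv : ∀ t ≥ (0:ℝ), ∀ x : Fin n → ℝ, HasFDerivAt (f t) (Df t x) x)
    (hDf_cont : ∀ t ≥ (0:ℝ), Continuous (Df t))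
    (hf0 : ∀ t ≥ (0:ℝ), ∀ x : Fin n → ℝ, f t x = 0 ↔ x = 0)
    (hDf_small : ∃ c : ℝ, c < α / (4 * K ^ 2) ∧ ∀ t ≥ (0:ℝ), ∀ x : Fin n → ℝ, ‖Df t x‖ ≤ c) :
    ∀ t₀ ≥ (0:ℝ), ∀ (ξ : Fin n → ℝ) (x : ℝ → Fin n → ℝ), x t₀ = ξ →
      (∀ t ≥ t₀, HasDerivAt x (A t *ᵥ x t + f t (x t)) t) →
      ∀ t ≥ t₀, ‖x t‖ ≤ K * exp (-α * (1 - 1 / (4 * K)) * (t - t₀)) * ‖ξ‖ :=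
  perturbed_linear_system_uniform_asymptotic_stability_general n A Φ hΦ_deriv hΦ_inv K α hK hED f Df
    hf_cont hf_deriv hf0 hDf_small
end

section
/- Let λ ∈ ℝ, γ ∈ ℝ with γ ≠ λ, and let C₀ : [0,∞) → Matrix (Fin n) (Fin n) ℝ be continuous with ‖C₀(t)‖ → 0 as t → ∞, and let Ψ_γ be the fundamental matrix of the shifted system u̇ = ((λ − γ)I + C₀(t))u. Then: if γ > λ there exist K ≥ 1, α > 0 with ‖Ψ_γ(t)Ψ_γ(s)⁻¹‖ ≤ K e^{-α(t-s)} for all t ≥ s ≥ 0 (exponential dichotomy on [0,∞) with projector P = I); and if γ < λ there exist K ≥ 1, α > 0 with ‖Ψ_γ(t)Ψ_γ(s)⁻¹‖ ≤ K e^{-α(s-t)} for all s ≥ t ≥ 0 (exponential dichotomy on [0,∞) with projector P = 0). Consequently the exponential dichotomy spectrum on [0,∞) of u̇ = (λI + C₀(t))u is contained in {λ}. -/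
/-
Rescaling by `exp (-lam * t)` turns the system into `Φ' = C₀ Φ` with `C₀ → 0`. Beyond a time `T`
where `‖C₀‖ ≤ ε`, Gronwall's inequality, run forwards or backwards in time, bounds the transition
matrices `Φ t * (Φ s)⁻¹` by `exp (ε * |t - s|)`; on `[0, T]` they are bounded by compactness, so
`‖Φ t * (Φ s)⁻¹‖ ≤ K * exp (ε * |t - s|)` for all `s, t ≥ 0`. The shift by `γ` multiplies these
matrices by `exp ((lam - γ) * (t - s))`, and `ε = |γ - lam| / 2` leaves uniform exponential decay
forwards in time if `γ > lam` (projection `1`) and backwards in time if `γ < lam` (projection `0`).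
-/

open Real Set Matrix Filter

attribute [local instance] Matrix.linftyOpNormedRing Matrix.linftyOpNormedSpace

/-- Given a fundamental matrix `Ψ` of `u̇ = M(t)u`, the shifted system
`u̇ = (M(t) − γI)u` has fundamental matrix `Ψ_γ(t) = e^{-γt}Ψ(t)`.  This
predicate states that the shifted system has an exponential dichotomy on
`[0,∞)` (for some projection `P` and constants `K ≥ 1`, `α > 0`). -/
def ShiftedED (n : ℕ) (Ψ : ℝ → Matrix (Fin n) (Fin n) ℝ) (γ : ℝ) : Prop :=
  ∃ P : Matrix (Fin n) (Fin n) ℝ, P * P = P ∧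
    ∃ K ≥ (1:ℝ), ∃ α > (0:ℝ),
      (∀ s t : ℝ, 0 ≤ s → s ≤ t →
        ‖(exp (-γ * t) • Ψ t) * P * (exp (-γ * s) • Ψ s)⁻¹‖ ≤ K * exp (-α * (t - s))) ∧
      (∀ t s : ℝ, 0 ≤ t → t ≤ s →
        ‖(exp (-γ * t) • Ψ t) * (1 - P) * (exp (-γ * s) • Ψ s)⁻¹‖ ≤ K * exp (-α * (s - t)))

attribute [local instance] Matrix.linftyOpNormedAlgebra

open Topology

section NormedAlgebra

variable {R : Type*} [NormedRing R] [NormedAlgebra ℝ R] {Φ C : ℝ → R}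

theorem norm_mul_le_of_hasDerivAt_mul_left (hΦ : ∀ x, HasDerivAt Φ (C x * Φ x) x)
    {a b c : ℝ} (hab : a ≤ b) (hC : ∀ x ∈ Icc a b, ‖C x‖ ≤ c) (A : R) :
    ‖Φ b * A‖ ≤ ‖Φ a * A‖ * exp (c * (b - a)) := by
  have hΦA (x : ℝ) : HasDerivAt (Φ · * A) (C x * (Φ x * A)) x := by
    simpa only [mul_assoc] using (hΦ x).mul_const A
  have bound (x : ℝ) (hx : x ∈ Ico a b) : ‖C x * (Φ x * A)‖ ≤ c * ‖Φ x * A‖ + 0 := by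
    rw [add_zero]
    exact (norm_mul_le _ _).trans
      (mul_le_mul_of_nonneg_right (hC x (Ico_subset_Icc_self hx)) (norm_nonneg _))
  have := norm_le_gronwallBound_of_norm_deriv_right_le
    (fun x _ => (hΦA x).continuousAt.continuousWithinAt) (fun x _ => (hΦA x).hasDerivWithinAt)
    le_rfl bound b (right_mem_Icc.2 hab)
  rwa [gronwallBound_ε0] at this

theorem norm_mul_le_of_hasDerivAt_mul_left_abs (hΦ : ∀ x, HasDerivAt Φ (C x * Φ x) x)
    {s t c : ℝ} (hC : ∀ x ∈ uIcc s t, ‖C x‖ ≤ c) (A : R) :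
    ‖Φ t * A‖ ≤ ‖Φ s * A‖ * exp (c * |t - s|) := by
  rcases le_total s t with hst | hts
  · rw [abs_of_nonneg (sub_nonneg.2 hst)]
    exact norm_mul_le_of_hasDerivAt_mul_left hΦ hst (fun x hx => hC x (Icc_subset_uIcc hx)) A
  · -- backwards in time: `x ↦ Φ (-x)` solves the equation with coefficient `-C (-x)`
    have hΦneg (x : ℝ) : HasDerivAt (fun y => Φ (-y)) (-C (-x) * Φ (-x)) x := by
      refine ((hΦ (-x)).scomp x (hasDerivAt_neg x)).congr_deriv ?_
      simp
    rw [abs_of_nonpos (sub_nonpos.2 hts), neg_sub]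
    simpa [neg_add_eq_sub] using norm_mul_le_of_hasDerivAt_mul_left hΦneg (neg_le_neg hts)
      (fun x hx => by simpa using hC (-x) (Icc_subset_uIcc' ⟨le_neg.1 hx.2, neg_le.1 hx.1⟩)) A

theorem hasDerivAt_exp_smul_of_hasDerivAt {Ψ : ℝ → R} {lam t : ℝ}
    (hΨ : HasDerivAt Ψ ((lam • (1 : R) + C t) * Ψ t) t) :
    HasDerivAt (fun t => exp (-lam * t) • Ψ t) (C t * (exp (-lam * t) • Ψ t)) t := by
  have hexp : HasDerivAt (fun t => exp (-lam * t)) (exp (-lam * t) * -lam) t := by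
    simpa using ((hasDerivAt_id t).const_mul (-lam)).exp
  refine (hexp.smul hΨ).congr_deriv ?_
  rw [add_mul, smul_mul_assoc, one_mul, mul_smul_comm]
  module

end NormedAlgebra

section Matrix

variable {ι : Type*} [Fintype ι] [DecidableEq ι]

theorem Matrix.linfty_opNorm_one_le : ‖(1 : Matrix ι ι ℝ)‖ ≤ 1 := by
  rw [← diagonal_one, linfty_opNorm_diagonal]
  exact (pi_norm_const_le (1 : ℝ)).trans norm_one.le

theorem Matrix.continuous_inv_of_isUnit {Φ : ℝ → Matrix ι ι ℝ} (hΦ : Continuous Φ)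
    (hΦu : ∀ t, IsUnit (Φ t)) : Continuous fun t => (Φ t)⁻¹ := by
  refine continuous_iff_continuousAt.2 fun t => (continuousAt_matrix_inv _ ?_).comp hΦ.continuousAt
  rw [Ring.inverse_eq_inv']
  exact continuousAt_inv₀ ((isUnit_iff_isUnit_det _).1 (hΦu t)).ne_zero

theorem Matrix.smul_mul_smul_inv (a : ℝ) {b : ℝ} (hb : b ≠ 0) (A : Matrix ι ι ℝ) {B : Matrix ι ι ℝ}
    (hB : IsUnit B) : (a • A) * (b • B)⁻¹ = (a / b) • (A * B⁻¹) := by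
  have hinv : (b • B)⁻¹ = b⁻¹ • B⁻¹ := by
    refine inv_eq_right_inv ?_
    rw [smul_mul_smul, mul_inv_cancel₀ hb, mul_nonsing_inv _ ((isUnit_iff_isUnit_det B).1 hB),
      one_smul]
  rw [hinv, smul_mul_smul, div_eq_mul_inv]

theorem Matrix.isUnit_smul {c : ℝ} (hc : c ≠ 0) {A : Matrix ι ι ℝ} (hA : IsUnit A) :
    IsUnit (c • A) := by
  rw [isUnit_iff_isUnit_det, det_smul]
  exact ((Ne.isUnit hc).pow _).mul ((isUnit_iff_isUnit_det A).1 hA)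

theorem exists_norm_mul_inv_le_exp_of_tendsto {Φ C : ℝ → Matrix ι ι ℝ}
    (hΦ : ∀ t, HasDerivAt Φ (C t * Φ t) t) (hΦu : ∀ t, IsUnit (Φ t))
    (hC : Tendsto (fun t => ‖C t‖) atTop (𝓝 0)) {ε : ℝ} (hε : 0 < ε) :
    ∃ K ≥ (1 : ℝ), ∀ s t, 0 ≤ s → 0 ≤ t → ‖Φ t * (Φ s)⁻¹‖ ≤ K * exp (ε * |t - s|) := by
  obtain ⟨T, hT⟩ := eventually_atTop.1 (hC.eventually (ge_mem_nhds hε))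
  have hΦc : Continuous Φ := continuous_iff_continuousAt.2 fun t => (hΦ t).continuousAt
  have hcomp : IsCompact (Icc 0 T ×ˢ Icc 0 T) := isCompact_Icc.prod isCompact_Icc
  obtain ⟨M, hM⟩ := hcomp.exists_bound_of_continuousOn ((hΦc.comp continuous_fst).mul
    ((continuous_inv_of_isUnit hΦc hΦu).comp continuous_snd)).continuousOn
  have hinv (t : ℝ) : Φ t * (Φ t)⁻¹ = 1 := mul_nonsing_inv _ ((isUnit_iff_isUnit_det _).1 (hΦu t))
  -- `t ↦ max t T` moves a time into `[T, ∞)`, where `‖C‖ ≤ ε`, at a cost bounded on `[0, T]²`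
  have hclamp (x y : ℝ) (hx : 0 ≤ x) (hy : 0 ≤ y) (hxy : max x T = max y T) :
      ‖Φ x * (Φ y)⁻¹‖ ≤ max M 1 := by
    by_cases hxyT : x ≤ T ∧ y ≤ T
    · exact (hM (x, y) ⟨⟨hx, hxyT.1⟩, hy, hxyT.2⟩).trans (le_max_left _ _)
    · have hxy' : x = y := by grind
      rw [hxy', hinv]
      exact linfty_opNorm_one_le.trans (le_max_right _ _)
  refine ⟨max M 1 * max M 1, one_le_mul_of_one_le_of_one_le (le_max_right _ _) (le_max_right _ _),
    fun s t hs ht => ?_⟩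
  set t' := max t T
  set s' := max s T
  have hmid : ‖Φ t' * (Φ s')⁻¹‖ ≤ exp (ε * |t - s|) := by
    have hC' : ∀ x ∈ uIcc s' t', ‖C x‖ ≤ ε := fun x hx =>
      hT x ((le_min (le_max_right _ _) (le_max_right _ _)).trans hx.1)
    calc ‖Φ t' * (Φ s')⁻¹‖ ≤ ‖Φ s' * (Φ s')⁻¹‖ * exp (ε * |t' - s'|) :=
          norm_mul_le_of_hasDerivAt_mul_left_abs hΦ hC' _
      _ ≤ 1 * exp (ε * |t - s|) := by
          rw [hinv]
          exact mul_le_mul linfty_opNorm_one_le (exp_le_exp.2 (mul_le_mul_of_nonneg_left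
            (abs_max_sub_max_le_abs t s T) hε.le)) (exp_pos _).le zero_le_one
      _ = exp (ε * |t - s|) := one_mul _
  have hsplit : Φ t * (Φ s)⁻¹ = (Φ t * (Φ t')⁻¹) * (Φ t' * (Φ s')⁻¹) * (Φ s' * (Φ s)⁻¹) := by
    simp only [Matrix.mul_assoc, ← Matrix.mul_assoc (Φ t')⁻¹, ← Matrix.mul_assoc (Φ s')⁻¹,
      nonsing_inv_mul _ ((isUnit_iff_isUnit_det _).1 (hΦu _)), Matrix.one_mul]
  calc ‖Φ t * (Φ s)⁻¹‖
      ≤ ‖Φ t * (Φ t')⁻¹‖ * ‖Φ t' * (Φ s')⁻¹‖ * ‖Φ s' * (Φ s)⁻¹‖ := by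
        rw [hsplit]; exact (norm_mul_le _ _).trans (by gcongr; exact norm_mul_le _ _)
    _ ≤ max M 1 * exp (ε * |t - s|) * max M 1 := by
        gcongr
        · exact hclamp t t' ht (ht.trans (le_max_left _ _)) (by simp [t'])
        · exact hclamp s' s (hs.trans (le_max_left _ _)) hs (by simp [s'])
    _ = max M 1 * max M 1 * exp (ε * |t - s|) := by ring

end Matrix

section ShiftedSystem

variable {ι : Type*} [Fintype ι] [DecidableEq ι] {lam : ℝ} {C₀ Ψ : ℝ → Matrix ι ι ℝ}

theorem exists_norm_shifted_le
    (hΨ : ∀ t, HasDerivAt Ψ ((lam • (1 : Matrix ι ι ℝ) + C₀ t) * Ψ t) t)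
    (hΨu : ∀ t, IsUnit (Ψ t)) (hC₀ : Tendsto (fun t => ‖C₀ t‖) atTop (𝓝 0))
    (γ : ℝ) {ε : ℝ} (hε : 0 < ε) :
    ∃ K ≥ (1 : ℝ), ∀ s t, 0 ≤ s → 0 ≤ t →
      ‖(exp (-γ * t) • Ψ t) * (exp (-γ * s) • Ψ s)⁻¹‖ ≤
        K * exp ((lam - γ) * (t - s) + ε * |t - s|) := by
  set Φ : ℝ → Matrix ι ι ℝ := fun t => exp (-lam * t) • Ψ t
  obtain ⟨K, hK, hΦ⟩ := exists_norm_mul_inv_le_exp_of_tendsto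
    (Φ := Φ) (fun t => hasDerivAt_exp_smul_of_hasDerivAt (hΨ t))
    (fun t => isUnit_smul (exp_ne_zero _) (hΨu t)) hC₀ hε
  refine ⟨K, hK, fun s t hs ht => ?_⟩
  have hshift : (exp (-γ * t) • Ψ t) * (exp (-γ * s) • Ψ s)⁻¹ =
      exp ((lam - γ) * (t - s)) • (Φ t * (Φ s)⁻¹) := by
    rw [smul_mul_smul_inv _ (exp_ne_zero _) _ (hΨu s),
      smul_mul_smul_inv _ (exp_ne_zero _) _ (hΨu s), smul_smul, ← exp_sub, ← exp_sub, ← exp_add]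
    ring_nf
  rw [hshift, norm_smul, norm_of_nonneg (exp_pos _).le, exp_add, mul_left_comm]
  exact mul_le_mul_of_nonneg_left (hΦ s t hs ht) (exp_pos _).le

theorem exists_forward_decay_of_lt
    (hΨ : ∀ t, HasDerivAt Ψ ((lam • (1 : Matrix ι ι ℝ) + C₀ t) * Ψ t) t)
    (hΨu : ∀ t, IsUnit (Ψ t)) (hC₀ : Tendsto (fun t => ‖C₀ t‖) atTop (𝓝 0))
    {γ : ℝ} (hγ : lam < γ) :
    ∃ K ≥ (1:ℝ), ∃ α > (0:ℝ), ∀ s t : ℝ, 0 ≤ s → s ≤ t →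
      ‖(exp (-γ * t) • Ψ t) * (exp (-γ * s) • Ψ s)⁻¹‖ ≤ K * exp (-α * (t - s)) := by
  obtain ⟨K, hK, hbound⟩ := exists_norm_shifted_le hΨ hΨu hC₀ γ (ε := (γ - lam) / 2) (by linarith)
  refine ⟨K, hK, (γ - lam) / 2, by linarith, fun s t hs hst => ?_⟩
  refine (hbound s t hs (hs.trans hst)).trans_eq ?_
  rw [abs_of_nonneg (sub_nonneg.2 hst)]
  ring_nf

theorem exists_backward_decay_of_gt
    (hΨ : ∀ t, HasDerivAt Ψ ((lam • (1 : Matrix ι ι ℝ) + C₀ t) * Ψ t) t)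
    (hΨu : ∀ t, IsUnit (Ψ t)) (hC₀ : Tendsto (fun t => ‖C₀ t‖) atTop (𝓝 0))
    {γ : ℝ} (hγ : γ < lam) :
    ∃ K ≥ (1:ℝ), ∃ α > (0:ℝ), ∀ t s : ℝ, 0 ≤ t → t ≤ s →
      ‖(exp (-γ * t) • Ψ t) * (exp (-γ * s) • Ψ s)⁻¹‖ ≤ K * exp (-α * (s - t)) := by
  obtain ⟨K, hK, hbound⟩ := exists_norm_shifted_le hΨ hΨu hC₀ γ (ε := (lam - γ) / 2) (by linarith)
  refine ⟨K, hK, (lam - γ) / 2, by linarith, fun t s ht hts => ?_⟩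
  refine (hbound s t (ht.trans hts) ht).trans_eq ?_
  rw [abs_of_nonpos (sub_nonpos.2 hts)]
  ring_nf

end ShiftedSystem

section Dichotomy

variable {n : ℕ} {Ψ : ℝ → Matrix (Fin n) (Fin n) ℝ} {γ : ℝ}

theorem shiftedED_of_forward_decay
    (h : ∃ K ≥ (1:ℝ), ∃ α > (0:ℝ), ∀ s t : ℝ, 0 ≤ s → s ≤ t →
      ‖(exp (-γ * t) • Ψ t) * (exp (-γ * s) • Ψ s)⁻¹‖ ≤ K * exp (-α * (t - s))) :
    ShiftedED n Ψ γ := by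
  obtain ⟨K, hK, α, hα, hdecay⟩ := h
  refine ⟨1, mul_one 1, K, hK, α, hα, fun s t hs hst => ?_, fun _ _ _ _ => ?_⟩
  · simpa only [Matrix.mul_one] using hdecay s t hs hst
  · rw [sub_self, Matrix.mul_zero, Matrix.zero_mul, norm_zero]
    positivity

theorem shiftedED_of_backward_decay
    (h : ∃ K ≥ (1:ℝ), ∃ α > (0:ℝ), ∀ t s : ℝ, 0 ≤ t → t ≤ s →
      ‖(exp (-γ * t) • Ψ t) * (exp (-γ * s) • Ψ s)⁻¹‖ ≤ K * exp (-α * (s - t))) :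
    ShiftedED n Ψ γ := by
  obtain ⟨K, hK, α, hα, hdecay⟩ := h
  refine ⟨0, mul_zero 0, K, hK, α, hα, fun _ _ _ _ => ?_, fun t s ht hts => ?_⟩
  · rw [Matrix.mul_zero, Matrix.zero_mul, norm_zero]
    positivity
  · simpa only [sub_zero, Matrix.mul_one] using hdecay t s ht hts

end Dichotomy

theorem shifted_dichotomy_and_spectrum_in_singleton_general
    (n : ℕ)
    (lam γ : ℝ)
    (C₀ : ℝ → Matrix (Fin n) (Fin n) ℝ)
    (hC₀_lim : Tendsto (fun t : ℝ => ‖C₀ t‖) atTop (nhds 0))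
    (Ψ : ℝ → Matrix (Fin n) (Fin n) ℝ)
    (hΨ_deriv : ∀ t : ℝ,
      HasDerivAt Ψ ((lam • (1 : Matrix (Fin n) (Fin n) ℝ) + C₀ t) * Ψ t) t)
    (hΨ_inv : ∀ t : ℝ, IsUnit (Ψ t)) :
    (γ > lam → ∃ K ≥ (1:ℝ), ∃ α > (0:ℝ), ∀ s t : ℝ, 0 ≤ s → s ≤ t →
      ‖(exp (-γ * t) • Ψ t) * (exp (-γ * s) • Ψ s)⁻¹‖ ≤ K * exp (-α * (t - s))) ∧
    (γ < lam → ∃ K ≥ (1:ℝ), ∃ α > (0:ℝ), ∀ t s : ℝ, 0 ≤ t → t ≤ s →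
      ‖(exp (-γ * t) • Ψ t) * (exp (-γ * s) • Ψ s)⁻¹‖ ≤ K * exp (-α * (s - t))) ∧
    {γ' : ℝ | ¬ ShiftedED n Ψ γ'} ⊆ {lam} := by
  have forward {γ : ℝ} (h : lam < γ) := exists_forward_decay_of_lt hΨ_deriv hΨ_inv hC₀_lim h
  have backward {γ : ℝ} (h : γ < lam) := exists_backward_decay_of_gt hΨ_deriv hΨ_inv hC₀_lim h
  refine ⟨forward, backward, fun γ' hγ' => ?_⟩
  by_contra hne
  rcases lt_or_gt_of_ne hne with hlt | hgt
  · exact hγ' (shiftedED_of_backward_decay (backward hlt))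
  · exact hγ' (shiftedED_of_forward_decay (forward hgt))

/-- For `u̇ = (λI + C₀(t))u` with `‖C₀(t)‖ → 0`, the shifted system corresponding
to `γ > λ` (resp. `γ < λ`) has an exponential dichotomy on `[0,∞)` with
projector `P = I` (resp. `P = 0`); consequently the exponential dichotomy
spectrum on `[0,∞)` is contained in `{λ}`. -/
theorem shifted_dichotomy_and_spectrum_in_singleton
    (n : ℕ)
    (lam γ : ℝ) (hγ : γ ≠ lam)
    (C₀ : ℝ → Matrix (Fin n) (Fin n) ℝ)
    (hC₀_cont : ContinuousOn C₀ (Ici 0))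
    (hC₀_lim : Tendsto (fun t : ℝ => ‖C₀ t‖) atTop (nhds 0))
    (Ψ : ℝ → Matrix (Fin n) (Fin n) ℝ)
    (hΨ_deriv : ∀ t : ℝ,
      HasDerivAt Ψ ((lam • (1 : Matrix (Fin n) (Fin n) ℝ) + C₀ t) * Ψ t) t)
    (hΨ0 : Ψ 0 = 1) (hΨ_inv : ∀ t : ℝ, IsUnit (Ψ t)) :
    (γ > lam → ∃ K ≥ (1:ℝ), ∃ α > (0:ℝ), ∀ s t : ℝ, 0 ≤ s → s ≤ t →
      ‖(exp (-γ * t) • Ψ t) * (exp (-γ * s) • Ψ s)⁻¹‖ ≤ K * exp (-α * (t - s))) ∧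
    (γ < lam → ∃ K ≥ (1:ℝ), ∃ α > (0:ℝ), ∀ t s : ℝ, 0 ≤ t → t ≤ s →
      ‖(exp (-γ * t) • Ψ t) * (exp (-γ * s) • Ψ s)⁻¹‖ ≤ K * exp (-α * (s - t))) ∧
    {γ' : ℝ | ¬ ShiftedED n Ψ γ'} ⊆ {lam} :=
  shifted_dichotomy_and_spectrum_in_singleton_general n lam γ C₀ hC₀_lim Ψ hΨ_deriv hΨ_inv
end

section
/- Let λ < 0, let a, b, g be real polynomials, and define F : ℝ³ → ℝ³ by F(x,y,z) = λ·(x,y,z) + g(z)(a(z)x + b(z)y)·(−b(z), a(z), 0) (note F(0) = 0). Then the origin is a global attractor of the autonomous system (ẋ,ẏ,ż) = F(x,y,z): every solution w : [0,∞) → ℝ³ of ẇ = F(w) satisfies w(t) → 0 as t → ∞. -/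
/-!
The height `z` obeys `z' = λ z`, so it tends to `0`. Since `H` points along `(-b, a, 0)`, the
quantity `u = a(z) x + b(z) y` is blind to `H`: `u' = λ u + λ z (a'(z) x + b'(z) y)`. Hence
`w' = λ w + u φ(z)` with `φ` bounded and `u' = λ u + o(‖w‖)`, a triangular perturbation of `λ I`
that still decays in the weighted norm `max ‖w‖ (K |u|)` for large `K`.
-/

open Real Filter Polynomial Topology

theorem HasDerivAt.fst {E F : Type*} [NormedAddCommGroup E] [NormedSpace ℝ E]
    [NormedAddCommGroup F] [NormedSpace ℝ F] {f : ℝ → E × F} {f' : E × F} {t : ℝ}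
    (h : HasDerivAt f f' t) : HasDerivAt (fun s => (f s).1) f'.1 t :=
  (ContinuousLinearMap.fst ℝ E F).hasFDerivAt.comp_hasDerivAt t h

theorem HasDerivAt.snd {E F : Type*} [NormedAddCommGroup E] [NormedSpace ℝ E]
    [NormedAddCommGroup F] [NormedSpace ℝ F] {f : ℝ → E × F} {f' : E × F} {t : ℝ}
    (h : HasDerivAt f f' t) : HasDerivAt (fun s => (f s).2) f'.2 t :=
  (ContinuousLinearMap.snd ℝ E F).hasFDerivAt.comp_hasDerivAt t h

section Decay

variable {E : Type*} [NormedAddCommGroup E] [NormedSpace ℝ E]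

theorem tendsto_exp_mul_atTop_nhds_zero {c : ℝ} (hc : c < 0) (C : ℝ) :
    Tendsto (fun t => C * exp (c * t)) atTop (𝓝 0) := by
  simpa using (tendsto_exp_atBot.comp (tendsto_id.const_mul_atTop_of_neg hc)).const_mul C

/-- Gronwall's inequality for `exp (-λ t) • v t`, whose derivative is `exp (-λ t) • (v' - λ • v)`. -/
theorem tendsto_zero_of_norm_deriv_sub_smul_le {lam μ : ℝ} (hlamμ : lam + μ < 0) {v v' : ℝ → E}
    (hv : ∀ᶠ t in atTop, HasDerivAt v (v' t) t)
    (hbound : ∀ᶠ t in atTop, ‖v' t - lam • v t‖ ≤ μ * ‖v t‖) :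
    Tendsto v atTop (𝓝 0) := by
  obtain ⟨T, hT⟩ := eventually_atTop.1 (hv.and hbound)
  have norm_exp_smul : ∀ (c : ℝ) (x : E), ‖exp c • x‖ = exp c * ‖x‖ := fun c x => by
    rw [norm_smul, norm_of_nonneg (exp_pos c).le]
  set f : ℝ → E := fun t => exp (-lam * t) • v t
  have hf : ∀ t ≥ T, HasDerivAt f (exp (-lam * t) • (v' t - lam • v t)) t := fun t ht => by
    have := (((hasDerivAt_id t).const_mul (-lam)).exp).smul (hT t ht).1
    refine this.congr_deriv ?_
    simp only [id, smul_sub, smul_smul]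
    module
  have hgronwall : ∀ t ≥ T, ‖f t‖ ≤ ‖f T‖ * exp (μ * (t - T)) := fun t ht => by
    rw [← gronwallBound_ε0]
    refine norm_le_gronwallBound_of_norm_deriv_right_le
      (fun s hs => (hf s hs.1).continuousAt.continuousWithinAt)
      (fun s hs => (hf s hs.1).hasDerivWithinAt) le_rfl (fun s hs => ?_) t ⟨ht, le_rfl⟩
    rw [norm_exp_smul, norm_exp_smul, add_zero, mul_left_comm]
    exact mul_le_mul_of_nonneg_left (hT s hs.1).2 (exp_pos _).le
  refine squeeze_zero_norm' ?_ (tendsto_exp_mul_atTop_nhds_zero hlamμ (‖f T‖ * exp (-μ * T)))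
  filter_upwards [eventually_ge_atTop T] with t ht
  have := hgronwall t ht
  rw [norm_exp_smul, ← le_div_iff₀' (exp_pos _), div_eq_mul_inv, ← exp_neg] at this
  refine this.trans_eq ?_
  rw [mul_assoc, mul_assoc, ← exp_add, ← exp_add]
  ring_nf

/-- In the norm `max ‖p‖ (K |q|)` on `(p, K q)`, both couplings are at most `-λ/2` times the norm
once `K ≥ C / (-λ/2)` and `K ε ≤ -λ/2`. -/
theorem tendsto_zero_of_hasDerivAt_triangular {lam : ℝ} (hlam : lam < 0) {p φ : ℝ → E}
    {q ψ ε : ℝ → ℝ} {C : ℝ}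
    (hp : ∀ᶠ t in atTop, HasDerivAt p (lam • p t + q t • φ t) t)
    (hq : ∀ᶠ t in atTop, HasDerivAt q (lam * q t + ψ t) t)
    (hφ : ∀ᶠ t in atTop, ‖φ t‖ ≤ C)
    (hψ : ∀ᶠ t in atTop, |ψ t| ≤ ε t * ‖p t‖)
    (hε : Tendsto ε atTop (𝓝 0)) :
    Tendsto p atTop (𝓝 0) := by
  set μ := -lam / 2 with hμ_def
  have hμ : 0 < μ := half_pos (neg_pos.2 hlam)
  set K := |C| / μ + 1
  have hK : 0 < K := by positivity
  have hCK : C ≤ μ * K := by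
    simp only [K, mul_add, mul_div_cancel₀ _ hμ.ne', mul_one]
    linarith [le_abs_self C]
  have hεK : ∀ᶠ t in atTop, K * ε t ≤ μ := by
    simpa using (hε.const_mul K).eventually_le_const (by simpa using hμ)
  set v : ℝ → E × ℝ := fun t => (p t, K * q t)
  have hv : Tendsto v atTop (𝓝 0) := by
    refine tendsto_zero_of_norm_deriv_sub_smul_le (show lam + μ < 0 by linarith)
      (v' := fun t => (lam • p t + q t • φ t, K * (lam * q t + ψ t)))
      (hp.and hq |>.mono fun t h => h.1.prodMk (h.2.const_mul K)) ?_
    filter_upwards [hφ, hψ, hεK] with t hφt hψt hεt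
    have hqv : K * |q t| ≤ ‖v t‖ := calc
      K * |q t| = ‖(v t).2‖ := by simp [v, abs_of_pos hK]
      _ ≤ ‖v t‖ := norm_snd_le (v t)
    have hpv : ‖p t‖ ≤ ‖v t‖ := norm_fst_le (v t)
    have hsub : (lam • p t + q t • φ t, K * (lam * q t + ψ t)) - lam • v t = (q t • φ t, K * ψ t) :=
      Prod.ext (by simp [v]) (by simp [v]; ring)
    rw [hsub, Prod.norm_def, norm_smul, Real.norm_eq_abs, Real.norm_eq_abs, abs_mul,
      abs_of_pos hK]
    refine max_le ?_ ?_
    · calc |q t| * ‖φ t‖ ≤ |q t| * (μ * K) :=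
            mul_le_mul_of_nonneg_left (hφt.trans hCK) (abs_nonneg _)
        _ = μ * (K * |q t|) := by ring
        _ ≤ μ * ‖v t‖ := mul_le_mul_of_nonneg_left hqv hμ.le
    · calc K * |ψ t| ≤ K * ε t * ‖p t‖ := by
            rw [mul_assoc]; exact mul_le_mul_of_nonneg_left hψt hK.le
        _ ≤ μ * ‖v t‖ := mul_le_mul hεt hpv (norm_nonneg _) hμ.le
  exact hv.fst_nhds

end Decay

def normalCoord (a b : ℝ[X]) (p : ℝ × ℝ × ℝ) : ℝ :=
  a.eval p.2.2 * p.1 + b.eval p.2.2 * p.2.1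

def shearDir (a b g : ℝ[X]) (s : ℝ) : ℝ × ℝ × ℝ :=
  g.eval s • (-b.eval s, a.eval s, 0)

section System

variable {lam t : ℝ} {a b g : ℝ[X]} {w : ℝ → ℝ × ℝ × ℝ}

theorem hasDerivAt_height
    (hw : HasDerivAt w (lam • w t + normalCoord a b (w t) • shearDir a b g (w t).2.2) t) :
    HasDerivAt (fun s => (w s).2.2) (lam * (w t).2.2) t := by
  simpa [shearDir] using hw.snd.snd

/-- `shearDir` is orthogonal to `(a, b, 0)`, so the coupling drops out of `normalCoord`'s
derivative and only the drift of the height `z` remains. -/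
theorem hasDerivAt_normalCoord
    (hw : HasDerivAt w (lam • w t + normalCoord a b (w t) • shearDir a b g (w t).2.2) t) :
    HasDerivAt (fun s => normalCoord a b (w s))
      (lam * normalCoord a b (w t) + lam * (w t).2.2 *
        (a.derivative.eval (w t).2.2 * (w t).1 + b.derivative.eval (w t).2.2 * (w t).2.1)) t := by
  have hz := hasDerivAt_height hw
  have hx := hw.fst
  have hy := hw.snd.fst
  have ha := (a.hasDerivAt _).comp t hz
  have hb := (b.hasDerivAt _).comp t hz
  refine ((ha.mul hx).add (hb.mul hy)).congr_deriv ?_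
  simp only [normalCoord, shearDir, Prod.smul_fst, Prod.smul_snd, Prod.fst_add, Prod.snd_add,
    smul_eq_mul, Function.comp_apply]
  ring

theorem abs_derivative_normalCoord_le (a b : ℝ[X]) (p : ℝ × ℝ × ℝ) :
    |a.derivative.eval p.2.2 * p.1 + b.derivative.eval p.2.2 * p.2.1| ≤
      (|a.derivative.eval p.2.2| + |b.derivative.eval p.2.2|) * ‖p‖ := by
  have hx : |p.1| ≤ ‖p‖ := norm_fst_le p
  have hy : |p.2.1| ≤ ‖p‖ := (norm_fst_le p.2).trans (norm_snd_le p)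
  calc |a.derivative.eval p.2.2 * p.1 + b.derivative.eval p.2.2 * p.2.1|
      _ ≤ |a.derivative.eval p.2.2| * |p.1| + |b.derivative.eval p.2.2| * |p.2.1| :=
        (abs_add_le _ _).trans_eq (by rw [abs_mul, abs_mul])
      _ ≤ (|a.derivative.eval p.2.2| + |b.derivative.eval p.2.2|) * ‖p‖ := by
        rw [add_mul]; gcongr

end System

/-- The origin is a global attractor of the autonomous system
`(ẋ,ẏ,ż) = F(x,y,z)` where `F = λI + H`, `λ < 0`, and
`H(x,y,z) = g(z)(a(z)x + b(z)y)·(−b(z), a(z), 0)`: every solution converges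
to the origin as `t → ∞`. -/
theorem origin_global_attractor
    (lam : ℝ) (hlam : lam < 0)
    (a b g : Polynomial ℝ)
    (F : ℝ × ℝ × ℝ → ℝ × ℝ × ℝ)
    (hF : ∀ p : ℝ × ℝ × ℝ, F p = lam • p +
      (g.eval p.2.2 * (a.eval p.2.2 * p.1 + b.eval p.2.2 * p.2.1)) •
        (-(b.eval p.2.2), a.eval p.2.2, (0:ℝ))) :
    F 0 = 0 ∧
    ∀ w : ℝ → ℝ × ℝ × ℝ, (∀ t ≥ (0:ℝ), HasDerivAt w (F (w t)) t) →
      Tendsto w atTop (nhds 0) := by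
  have hF' : ∀ p, F p = lam • p + normalCoord a b p • shearDir a b g p.2.2 := fun p => by
    rw [hF, shearDir, normalCoord, smul_smul, mul_comm]
  refine ⟨by simp [hF', normalCoord], fun w hw => ?_⟩
  have hw' : ∀ᶠ t in atTop,
      HasDerivAt w (lam • w t + normalCoord a b (w t) • shearDir a b g (w t).2.2) t :=
    (eventually_ge_atTop 0).mono fun t ht => hF' (w t) ▸ hw t ht
  have hz : Tendsto (fun t => (w t).2.2) atTop (𝓝 0) :=
    tendsto_zero_of_norm_deriv_sub_smul_le (μ := 0) (by simpa using hlam)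
      (hw'.mono fun t h => hasDerivAt_height h) (.of_forall fun t => by simp)
  have hφ : Tendsto (fun t => shearDir a b g (w t).2.2) atTop (𝓝 (shearDir a b g 0)) :=
    ((by unfold shearDir; fun_prop : Continuous (shearDir a b g)).tendsto 0).comp hz
  have hε : Tendsto (fun t => |lam| * |(w t).2.2| *
      (|a.derivative.eval (w t).2.2| + |b.derivative.eval (w t).2.2|)) atTop (𝓝 0) := by
    have h := ((by fun_prop : Continuous fun s => |lam| * |s| *
      (|a.derivative.eval s| + |b.derivative.eval s|)).tendsto 0).comp hz
    rwa [abs_zero, mul_zero, zero_mul] at h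
  refine tendsto_zero_of_hasDerivAt_triangular hlam hw'
    (hw'.mono fun t h => hasDerivAt_normalCoord h)
    (hφ.norm.eventually_le_const (lt_add_one _)) (.of_forall fun t => ?_) hε
  simpa only [abs_mul, mul_assoc] using mul_le_mul_of_nonneg_left
    (abs_derivative_normalCoord_le a b (w t)) (by positivity : 0 ≤ |lam| * |(w t).2.2|)
end

section
/- Let A : [0,∞) → Matrix (Fin n) (Fin n) ℝ be bounded and continuous with fundamental matrix Φ. Then the following are equivalent: (i) there exist constants K ≥ 1 and α > 0 such that ‖Φ(t)Φ(s)⁻¹‖ ≤ K e^{-α(t-s)} for all t ≥ s ≥ 0 (uniform asymptotic stability, i.e., exponential dichotomy on [0,∞) with projector P = I); (ii) for every γ ≥ 0 the shifted system ẋ = (A(t) − γI)x, whose fundamental matrix is Φ_γ(t) = e^{-γt}Φ(t), has an exponential dichotomy on [0,∞) for some projection P_γ (P_γ² = P_γ) and constants K_γ ≥ 1, α_γ > 0. In other words, the linear system ẋ = A(t)x is uniformly asymptotically stable if and only if its exponential dichotomy spectrum on [0,∞) is contained in (−∞, 0). -/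
open Real Set Matrix

attribute [local instance] Matrix.linftyOpNormedRing Matrix.linftyOpNormedSpace

private lemma auxVanish {x c α : ℝ} (hα : 0 < α)
    (h : ∀ s ≥ (0:ℝ), x ≤ c * exp (-α * s)) : x ≤ 0 := by
  have h1 : Filter.Tendsto (fun s : ℝ => α * s) Filter.atTop Filter.atTop :=
    Filter.Tendsto.const_mul_atTop hα Filter.tendsto_id
  have h2 := Real.tendsto_exp_neg_atTop_nhds_zero.comp h1
  have h3 := h2.const_mul c
  have ht : Filter.Tendsto (fun s : ℝ => c * exp (-α * s)) Filter.atTop (nhds 0) := by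
    simpa [Function.comp, neg_mul] using h3
  exact ge_of_tendsto ht (Filter.eventually_atTop.mpr ⟨0, fun s hs => h s hs⟩)

private lemma auxNoDom {c C a b : ℝ} (hc : 0 < c) (hba : b < a)
    (h : ∀ s ≥ (0:ℝ), c * exp (a * s) ≤ C * exp (b * s)) : False := by
  have ht : Filter.Tendsto (fun s : ℝ => c * exp ((a - b) * s)) Filter.atTop Filter.atTop := by
    apply Filter.Tendsto.const_mul_atTop hc
    exact Real.tendsto_exp_atTop.comp
      (Filter.Tendsto.const_mul_atTop (by linarith) Filter.tendsto_id)
  obtain ⟨s, hs⟩ := ((ht.eventually_gt_atTop C).and (Filter.eventually_ge_atTop 0)).exists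
  have h1 := h s hs.2
  have hE : exp ((a - b) * s) * exp (b * s) = exp (a * s) := by
    rw [← Real.exp_add]; congr 1; ring
  rw [← hE] at h1
  nlinarith [exp_pos (b * s), hs.1]

private lemma auxSmulInv {n : ℕ} (c : ℝ) (hc : c ≠ 0) (M : Matrix (Fin n) (Fin n) ℝ)
    (hM : IsUnit M) : (c • M)⁻¹ = c⁻¹ • M⁻¹ := by
  apply Matrix.inv_eq_right_inv
  rw [smul_mul_smul_comm, Matrix.mul_nonsing_inv _ ((Matrix.isUnit_iff_isUnit_det _).mp hM),
    mul_inv_cancel₀ hc, one_smul]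

private lemma auxGronwall {n : ℕ} (A Φ : ℝ → Matrix (Fin n) (Fin n) ℝ) (M : ℝ)
    (hM : ∀ t ≥ (0:ℝ), ‖A t‖ ≤ M)
    (hd : ∀ t, HasDerivAt Φ (A t * Φ t) t) :
    ∀ t ≥ (0:ℝ), ‖Φ t‖ ≤ ‖Φ 0‖ * exp (M * t) := by
  intro t ht
  have key := norm_le_gronwallBound_of_norm_deriv_right_le
    (f := Φ) (f' := fun u => A u * Φ u) (δ := ‖Φ 0‖) (K := M) (ε := 0) (a := 0) (b := t)
    (fun u _ => (hd u).continuousAt.continuousWithinAt)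
    (fun u _ => (hd u).hasDerivWithinAt)
    le_rfl
    (fun u hu => by
      rw [add_zero]
      calc ‖A u * Φ u‖ ≤ ‖A u‖ * ‖Φ u‖ := norm_mul_le _ _
        _ ≤ M * ‖Φ u‖ := mul_le_mul_of_nonneg_right (hM u hu.1) (norm_nonneg _))
  have := key t ⟨ht, le_rfl⟩
  rwa [gronwallBound_ε0, sub_zero] at this

/-- A bounded continuous linear system `ẋ = A(t)x` with fundamental matrix `Φ`
is uniformly asymptotically stable (exponential dichotomy on `[0,∞)` with
projector `P = I`) if and only if for every `γ ≥ 0` the shifted system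
`ẋ = (A(t) − γI)x`, with fundamental matrix `Φ_γ(t) = e^{-γt}Φ(t)`, has an
exponential dichotomy on `[0,∞)`; that is, iff its exponential dichotomy
spectrum on `[0,∞)` is contained in `(−∞, 0)`. -/
theorem uniform_asymptotic_stability_iff_spectrum_negative
    (n : ℕ)
    (A : ℝ → Matrix (Fin n) (Fin n) ℝ)
    (hA_cont : ContinuousOn A (Ici 0))
    (hA_bdd : ∃ M : ℝ, ∀ t ≥ (0:ℝ), ‖A t‖ ≤ M)
    (Φ : ℝ → Matrix (Fin n) (Fin n) ℝ)
    (hΦ_deriv : ∀ t : ℝ, HasDerivAt Φ (A t * Φ t) t)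
    (hΦ0 : Φ 0 = 1)
    (hΦ_inv : ∀ t : ℝ, IsUnit (Φ t)) :
    (∃ K ≥ (1:ℝ), ∃ α > (0:ℝ), ∀ s t : ℝ, 0 ≤ s → s ≤ t →
        ‖Φ t * (Φ s)⁻¹‖ ≤ K * exp (-α * (t - s))) ↔
    (∀ γ ≥ (0:ℝ), ∃ P : Matrix (Fin n) (Fin n) ℝ, P * P = P ∧
      ∃ K ≥ (1:ℝ), ∃ α > (0:ℝ),
        (∀ s t : ℝ, 0 ≤ s → s ≤ t →
          ‖(exp (-γ * t) • Φ t) * P * (exp (-γ * s) • Φ s)⁻¹‖ ≤ K * exp (-α * (t - s))) ∧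
        (∀ t s : ℝ, 0 ≤ t → t ≤ s →
          ‖(exp (-γ * t) • Φ t) * (1 - P) * (exp (-γ * s) • Φ s)⁻¹‖ ≤
            K * exp (-α * (s - t)))) := by
  have hdet : ∀ t : ℝ, IsUnit (Φ t).det := fun t => (Matrix.isUnit_iff_isUnit_det _).mp (hΦ_inv t)
  -- a normalization of the shifted norms
  have hnorm : ∀ (γ : ℝ) (Q : Matrix (Fin n) (Fin n) ℝ) (t s : ℝ),
      ‖(exp (-γ * t) • Φ t) * Q * (exp (-γ * s) • Φ s)⁻¹‖
        = exp (-γ * t) * exp (γ * s) * ‖Φ t * Q * (Φ s)⁻¹‖ := by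
    intro γ Q t s
    have hinv : (exp (-γ * s) • Φ s)⁻¹ = exp (γ * s) • (Φ s)⁻¹ := by
      rw [auxSmulInv _ (exp_ne_zero _) _ (hΦ_inv s), ← Real.exp_neg]
      congr 2
      ring
    rw [hinv, smul_mul_assoc, smul_mul_assoc, mul_smul_comm, norm_smul, norm_smul,
      Real.norm_eq_abs, Real.norm_eq_abs, abs_of_pos (exp_pos _), abs_of_pos (exp_pos _)]
    ring
  constructor
  · rintro ⟨K, hK, α, hα, hbound⟩ γ hγ
    refine ⟨1, one_mul 1, K, hK, α, hα, ?_, ?_⟩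
    · intro s t hs hst
      rw [hnorm γ 1 t s, mul_one]
      have h1 := hbound s t hs hst
      have e1 : exp (-γ * t) * exp (γ * s) ≤ 1 := by
        rw [← Real.exp_add, ← Real.exp_zero]
        apply exp_le_exp.mpr
        nlinarith [mul_le_mul_of_nonneg_left hst hγ]
      calc exp (-γ * t) * exp (γ * s) * ‖Φ t * (Φ s)⁻¹‖
          ≤ 1 * ‖Φ t * (Φ s)⁻¹‖ :=
            mul_le_mul_of_nonneg_right e1 (norm_nonneg _)
        _ = ‖Φ t * (Φ s)⁻¹‖ := one_mul _
        _ ≤ K * exp (-α * (t - s)) := h1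
    · intro t s ht hts
      rw [sub_self, Matrix.mul_zero, Matrix.zero_mul, norm_zero]
      positivity
  · intro h
    -- extract plain (unweighted) dichotomy inequalities
    have extract : ∀ γ ≥ (0:ℝ), ∃ P : Matrix (Fin n) (Fin n) ℝ, P * P = P ∧
        ∃ K α : ℝ, 1 ≤ K ∧ 0 < α ∧
        (∀ s t : ℝ, 0 ≤ s → s ≤ t →
          ‖Φ t * P * (Φ s)⁻¹‖ ≤ K * exp ((γ - α) * (t - s))) ∧
        (∀ t s : ℝ, 0 ≤ t → t ≤ s →
          ‖Φ t * (1 - P) * (Φ s)⁻¹‖ ≤ K * exp (-(γ + α) * (s - t))) := by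
      intro γ hγ
      obtain ⟨P, hP, K, hK, α, hα, h1, h2⟩ := h γ hγ
      refine ⟨P, hP, K, α, hK, hα, ?_, ?_⟩
      · intro s t hs hst
        have key : exp (-γ * t) * exp (γ * s) * ‖Φ t * P * (Φ s)⁻¹‖
            ≤ K * exp (-α * (t - s)) := by
          rw [← hnorm]; exact h1 s t hs hst
        have e2 : exp (-γ * t) * exp (γ * s) * exp (γ * (t - s)) = 1 := by
          rw [← Real.exp_add, ← Real.exp_add, ← Real.exp_zero]
          congr 1; ring
        calc ‖Φ t * P * (Φ s)⁻¹‖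
            = exp (-γ * t) * exp (γ * s) * ‖Φ t * P * (Φ s)⁻¹‖ * exp (γ * (t - s)) := by
              linear_combination (-‖Φ t * P * (Φ s)⁻¹‖) * e2
          _ ≤ K * exp (-α * (t - s)) * exp (γ * (t - s)) :=
              mul_le_mul_of_nonneg_right key (exp_pos _).le
          _ = K * exp ((γ - α) * (t - s)) := by
              rw [mul_assoc, ← Real.exp_add]; congr 2; ring
      · intro t s ht hts
        have key : exp (-γ * t) * exp (γ * s) * ‖Φ t * (1 - P) * (Φ s)⁻¹‖
            ≤ K * exp (-α * (s - t)) := by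
          rw [← hnorm]; exact h2 t s ht hts
        have e2 : exp (-γ * t) * exp (γ * s) * exp (-γ * (s - t)) = 1 := by
          rw [← Real.exp_add, ← Real.exp_add, ← Real.exp_zero]
          congr 1; ring
        calc ‖Φ t * (1 - P) * (Φ s)⁻¹‖
            = exp (-γ * t) * exp (γ * s) * ‖Φ t * (1 - P) * (Φ s)⁻¹‖ * exp (-γ * (s - t)) := by
              linear_combination (-‖Φ t * (1 - P) * (Φ s)⁻¹‖) * e2
          _ ≤ K * exp (-α * (s - t)) * exp (-γ * (s - t)) :=
              mul_le_mul_of_nonneg_right key (exp_pos _).le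
          _ = K * exp (-(γ + α) * (s - t)) := by
              rw [mul_assoc, ← Real.exp_add]; congr 2; ring
    obtain ⟨P₀, hP₀, K₀, α₀, hK₀, hα₀, h01, h02⟩ := extract 0 le_rfl
    -- the dichotomy projector at γ = 0 is the identity
    have hQ : (1 : Matrix (Fin n) (Fin n) ℝ) - P₀ = 0 := by
      by_contra hne
      obtain ⟨ξ, hξ⟩ : ∃ ξ : Fin n → ℝ, (1 - P₀) *ᵥ ξ ≠ 0 := by
        by_contra hc
        push_neg at hc
        apply hne
        ext i j
        have := congrFun (hc (Pi.single j 1)) i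
        simpa using this
      set η := (1 - P₀) *ᵥ ξ with hηdef
      have hidem : ∀ P : Matrix (Fin n) (Fin n) ℝ, P * P = P →
          (1 - P) * (1 - P) = 1 - P := by
        intro P hP
        rw [sub_mul, one_mul, mul_sub, mul_one, hP]
        abel
      have hη : (1 - P₀) *ᵥ η = η := by
        rw [hηdef, Matrix.mulVec_mulVec, hidem P₀ hP₀]
      have hηne : η ≠ 0 := hξ
      -- lower estimate from the unstable part
      have hB : ∀ (γ K α : ℝ) (P : Matrix (Fin n) (Fin n) ℝ),
          (∀ t s : ℝ, 0 ≤ t → t ≤ s →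
            ‖Φ t * (1 - P) * (Φ s)⁻¹‖ ≤ K * exp (-(γ + α) * (s - t))) →
          ∀ s ≥ (0:ℝ), ∀ v : Fin n → ℝ,
            ‖(1 - P) *ᵥ v‖ ≤ K * exp (-(γ + α) * s) * ‖Φ s *ᵥ v‖ := by
        intro γ K α P h2 s hs v
        have hfact : (1 - P) *ᵥ v = (Φ 0 * (1 - P) * (Φ s)⁻¹) *ᵥ (Φ s *ᵥ v) := by
          rw [Matrix.mulVec_mulVec, hΦ0, one_mul, mul_assoc,
            Matrix.nonsing_inv_mul _ (hdet s), mul_one]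
        rw [hfact]
        calc ‖(Φ 0 * (1 - P) * (Φ s)⁻¹) *ᵥ (Φ s *ᵥ v)‖
            ≤ ‖Φ 0 * (1 - P) * (Φ s)⁻¹‖ * ‖Φ s *ᵥ v‖ := Matrix.linfty_opNorm_mulVec _ _
          _ ≤ K * exp (-(γ + α) * (s - 0)) * ‖Φ s *ᵥ v‖ :=
              mul_le_mul_of_nonneg_right (h2 0 s le_rfl hs) (norm_nonneg _)
          _ = K * exp (-(γ + α) * s) * ‖Φ s *ᵥ v‖ := by rw [sub_zero]
      -- upper estimate on the stable part
      have hA : ∀ (γ K α : ℝ) (P : Matrix (Fin n) (Fin n) ℝ),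
          (∀ s t : ℝ, 0 ≤ s → s ≤ t →
            ‖Φ t * P * (Φ s)⁻¹‖ ≤ K * exp ((γ - α) * (t - s))) →
          (1 - P) *ᵥ η = 0 →
          ∀ t ≥ (0:ℝ), ‖Φ t *ᵥ η‖ ≤ K * ‖η‖ * exp ((γ - α) * t) := by
        intro γ K α P h1 h0 t ht
        have hPη : P *ᵥ η = η := by
          rw [Matrix.sub_mulVec, Matrix.one_mulVec, sub_eq_zero] at h0
          exact h0.symm
        have hfact : Φ t *ᵥ η = (Φ t * P * (Φ 0)⁻¹) *ᵥ η := by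
          rw [hΦ0, inv_one, mul_one, ← Matrix.mulVec_mulVec, hPη]
        rw [hfact]
        calc ‖(Φ t * P * (Φ 0)⁻¹) *ᵥ η‖
            ≤ ‖Φ t * P * (Φ 0)⁻¹‖ * ‖η‖ := Matrix.linfty_opNorm_mulVec _ _
          _ ≤ K * exp ((γ - α) * (t - 0)) * ‖η‖ :=
              mul_le_mul_of_nonneg_right (h1 0 t le_rfl ht) (norm_nonneg _)
          _ = K * ‖η‖ * exp ((γ - α) * t) := by rw [sub_zero]; ring
      -- the set of admissible exponential growth rates of `t ↦ Φ t *ᵥ η`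
      set U : Set ℝ := {γ | 0 ≤ γ ∧ ∃ C : ℝ, ∀ t ≥ (0:ℝ), ‖Φ t *ᵥ η‖ ≤ C * exp (γ * t)}
        with hUdef
      have h0U : (0:ℝ) ∉ U := by
        rintro ⟨-, C, hC⟩
        have hvan : ∀ s ≥ (0:ℝ), ‖η‖ ≤ K₀ * C * exp (-α₀ * s) := by
          intro s hs
          have b1 := hB 0 K₀ α₀ P₀ h02 s hs η
          rw [hη] at b1
          have b2 := hC s hs
          rw [zero_mul, Real.exp_zero, mul_one] at b2
          calc ‖η‖ ≤ K₀ * exp (-(0 + α₀) * s) * ‖Φ s *ᵥ η‖ := b1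
            _ ≤ K₀ * exp (-(0 + α₀) * s) * C :=
                mul_le_mul_of_nonneg_left b2 (by positivity)
            _ = K₀ * C * exp (-α₀ * s) := by rw [zero_add]; ring
        have : ‖η‖ ≤ 0 := auxVanish hα₀ hvan
        exact hηne (norm_le_zero_iff.mp (le_antisymm this (norm_nonneg _) ▸ this))
      obtain ⟨M, hM⟩ := hA_bdd
      have hM0 : (0:ℝ) ≤ M := le_trans (norm_nonneg (A 0)) (hM 0 le_rfl)
      have hMem : M ∈ U := by
        refine ⟨hM0, ‖Φ 0‖ * ‖η‖, fun t ht => ?_⟩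
        calc ‖Φ t *ᵥ η‖ ≤ ‖Φ t‖ * ‖η‖ := Matrix.linfty_opNorm_mulVec _ _
          _ ≤ ‖Φ 0‖ * exp (M * t) * ‖η‖ :=
              mul_le_mul_of_nonneg_right (auxGronwall A Φ M hM hΦ_deriv t ht) (norm_nonneg _)
          _ = ‖Φ 0‖ * ‖η‖ * exp (M * t) := by ring
      have hUne : U.Nonempty := ⟨M, hMem⟩
      have hUbdd : BddBelow U := ⟨0, fun γ hγ => hγ.1⟩
      set β := sInf U with hβdef
      have hβ0 : 0 ≤ β := le_csInf hUne (fun γ hγ => hγ.1)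
      obtain ⟨P, hP, K, α, hK, hα, h1, h2⟩ := extract β hβ0
      have hKpos : (0:ℝ) < K := lt_of_lt_of_le one_pos hK
      by_cases hmem : ∃ C : ℝ, ∀ t ≥ (0:ℝ), ‖Φ t *ᵥ η‖ ≤ C * exp (β * t)
      · -- β is attained: the solution decays strictly faster, contradicting minimality
        obtain ⟨C, hC⟩ := hmem
        have hzero : (1 - P) *ᵥ η = 0 := by
          rw [← norm_le_zero_iff]
          apply auxVanish hα
          intro s hs
          have b1 := hB β K α P h2 s hs η
          have b2 := hC s hs
          calc ‖(1 - P) *ᵥ η‖ ≤ K * exp (-(β + α) * s) * ‖Φ s *ᵥ η‖ := b1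
            _ ≤ K * exp (-(β + α) * s) * (C * exp (β * s)) :=
                mul_le_mul_of_nonneg_left b2 (by positivity)
            _ = K * C * (exp (-(β + α) * s) * exp (β * s)) := by ring
            _ = K * C * exp (-α * s) := by rw [← Real.exp_add]; congr 2; ring
        have hbound := hA β K α P h1 hzero
        rcases eq_or_lt_of_le hβ0 with hβeq | hβpos
        · exact h0U ⟨le_rfl, C, fun t ht => by rw [hβeq]; exact hC t ht⟩
        · have hγ'U : max 0 (β - α) ∈ U := by
            refine ⟨le_max_left _ _, K * ‖η‖, fun t ht => ?_⟩
            calc ‖Φ t *ᵥ η‖ ≤ K * ‖η‖ * exp ((β - α) * t) := hbound t ht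
              _ ≤ K * ‖η‖ * exp (max 0 (β - α) * t) := by
                  apply mul_le_mul_of_nonneg_left _ (by positivity)
                  exact exp_le_exp.mpr (mul_le_mul_of_nonneg_right (le_max_right _ _) ht)
          have hle : β ≤ max 0 (β - α) := csInf_le hUbdd hγ'U
          have hlt : max 0 (β - α) < β := max_lt hβpos (by linarith)
          linarith
      · -- β is not attained: the solution grows, contradicting membership near β
        push_neg at hmem
        have hne2 : (1 - P) *ᵥ η ≠ 0 := by
          intro h0
          have hbound := hA β K α P h1 h0
          obtain ⟨t, ht, hlt⟩ := hmem (K * ‖η‖)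
          have hle2 : ‖Φ t *ᵥ η‖ ≤ K * ‖η‖ * exp (β * t) := by
            refine le_trans (hbound t ht) ?_
            apply mul_le_mul_of_nonneg_left _ (by positivity)
            exact exp_le_exp.mpr (by nlinarith)
          linarith
        have hlow : ∀ s ≥ (0:ℝ), ‖(1 - P) *ᵥ η‖ / K * exp ((β + α) * s) ≤ ‖Φ s *ᵥ η‖ := by
          intro s hs
          have b1 := hB β K α P h2 s hs η
          have hE : exp (-(β + α) * s) * exp ((β + α) * s) = 1 := by
            rw [← Real.exp_add, ← Real.exp_zero]; congr 1; ring
          rw [div_mul_eq_mul_div, div_le_iff₀ hKpos]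
          calc ‖(1 - P) *ᵥ η‖ * exp ((β + α) * s)
              ≤ K * exp (-(β + α) * s) * ‖Φ s *ᵥ η‖ * exp ((β + α) * s) :=
                mul_le_mul_of_nonneg_right b1 (exp_pos _).le
            _ = ‖Φ s *ᵥ η‖ * K := by
                linear_combination (K * ‖Φ s *ᵥ η‖) * hE
        obtain ⟨γ, hγU, hγlt⟩ := exists_lt_of_csInf_lt hUne
          (show sInf U < β + α by rw [← hβdef]; linarith)
        obtain ⟨hγ0, C, hC⟩ := hγU
        exact auxNoDom (div_pos (norm_pos_iff.mpr hne2) hKpos) hγlt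
          (fun s hs => le_trans (hlow s hs) (hC s hs))
    have hP1 : P₀ = 1 := (sub_eq_zero.mp hQ).symm
    refine ⟨K₀, hK₀, α₀, hα₀, fun s t hs hst => ?_⟩
    have := h01 s t hs hst
    rw [hP1, mul_one, zero_sub] at this
    exact this
end
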